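/- arXiv:1303.3989 — 11 statements merged into one kernel-verified Lean document; each statement's English description precedes it below -/
import Mathlib

section
/- Suppose: (1) X is a topological space on which a countable group G acts by homeomorphisms; (2) {(X_i, w_i)}_{i=1}^m is a signed fundamental domain for the action of G on X with each X_i a Borel set; (3) μ is a positive G-invariant Borel measure on X (μ(g·A) = μ(A) for every Borel set A and g ∈ G); (4) f : X → ℂ is a Borel-measurable G-invariant function (f(g·x) = f(x) for all x ∈ X, g ∈ G); (5) F ⊆ X is a Borel set which is a true fundamental domain for G acting on X (every G-orbit meets F in exactly one point) and ∫_F |f(x)| dμ(x) < ∞. Then ∫_{X_i} |f(x)| dμ(x) < ∞ for each 1 ≤ i ≤ m, and ∫_F f(x) dμ(x) = ∑_{i=1}^m w_i ∫_{X_i} f(x) dμ(x). -/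
/-!
Enumerate the countable group as `g₀, g₁, …` and cut `X` into the disjoint pieces
`Pₙ = gₙ • F \ ⋃_{k<n} gₖ • F`, which cover `X` because every orbit meets `F`. For a measurable
`B`, the sets `Aₙ = gₙ⁻¹ • (B ∩ Pₙ)` lie in `F`, and for `y ∈ F` the map `n ↦ gₙ • y` is a
bijection from `{n | y ∈ Aₙ}` onto `B ∩ G • y`, so `∑ₙ 1_{Aₙ} = #(B ∩ G • y)` on `F`.
By invariance of `μ`, the measures `μ|_B` and `∑ₙ μ|_{Aₙ} = #(B ∩ G • y) · μ|_F` agree on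
`G`-invariant measurable sets, hence they integrate `G`-invariant functions alike:
`∫_B f = ∫_F #(B ∩ G • y) f(y) dμ`. Weighting these identities for `B = Xᵢ` by `wᵢ` and summing,
the signed fundamental domain condition `∑ᵢ wᵢ #(Xᵢ ∩ G • y) = 1` gives the formula, while the
uniform bound on the counts gives integrability over each `Xᵢ`.
-/

open scoped Classical
open MeasureTheory

open MulAction Set
open scoped ENNReal Pointwise

namespace MeasurableSpace

abbrev smulInvariants (G X : Type*) [SMul G X] [MeasurableSpace X] : MeasurableSpace X :=
  ⨅ g : G, invariants (g • · : X → X)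

variable {G X Y : Type*} [SMul G X] [MeasurableSpace X] [MeasurableSpace Y]

theorem measurableSet_smulInvariants [Nonempty G] {s : Set X} :
    MeasurableSet[smulInvariants G X] s ↔ MeasurableSet s ∧ ∀ g : G, (g • ·) ⁻¹' s = s := by
  simp only [MeasurableSpace.measurableSet_iInf, measurableSet_invariants, forall_and]
  exact and_congr_left' ⟨fun h => h (Classical.arbitrary G), fun h _ => h⟩

variable (G) in
theorem smulInvariants_le [Nonempty G] : smulInvariants G X ≤ ‹MeasurableSpace X› :=
  fun _ hs => (measurableSet_smulInvariants.1 hs).1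

theorem measurable_smulInvariants [Nonempty G] {f : X → Y} (hf : Measurable f)
    (hinv : ∀ (g : G) (x : X), f (g • x) = f x) : Measurable[smulInvariants G X] f :=
  fun _ hs => measurableSet_smulInvariants.2 ⟨hf hs, fun g => by ext; simp [hinv]⟩

end MeasurableSpace

open MeasurableSpace

theorem Set.toReal_encard {α : Type*} (s : Set α) : (s.encard : ℝ≥0∞).toReal = s.ncard := by
  rcases s.finite_or_infinite with hs | hs
  · rw [← hs.cast_ncard_eq]; simp
  · simp [hs.encard_eq, hs.ncard]

section DisjointedTranslates

variable {G X : Type*} [Group G] [MulAction G X] {F B : Set X} {g : ℕ → G}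

def disjointedTranslates (g : ℕ → G) (F : Set X) : ℕ → Set X :=
  disjointed fun n => g n • F

theorem iUnion_disjointedTranslates (hg : g.Surjective)
    (hF : ∀ x : X, ∃ y, y ∈ F ∩ orbit G x) : ⋃ n, disjointedTranslates g F n = univ := by
  refine eq_univ_of_forall fun x => ?_
  obtain ⟨y, hyF, h, rfl⟩ := hF x
  obtain ⟨n, hn⟩ := hg h⁻¹
  rw [disjointedTranslates, iUnion_disjointed, mem_iUnion]
  exact ⟨n, by rw [hn, ← inv_smul_smul h x]; exact smul_mem_smul_set hyF⟩

theorem preimage_smul_inter_disjointedTranslates_subset (B : Set X) (n : ℕ) :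
    (g n • ·) ⁻¹' (B ∩ disjointedTranslates g F n) ⊆ F := fun _ hy =>
  (smul_mem_smul_set_iff).1 (disjointed_subset _ n hy.2)

theorem bijOn_smul_inter_orbit (hg : g.Surjective) (hF : ∀ x : X, ∃! y, y ∈ F ∩ orbit G x)
    {y : X} (hy : y ∈ F) :
    BijOn (g · • y) {n | g n • y ∈ B ∩ disjointedTranslates g F n} (B ∩ orbit G y) := by
  refine ⟨fun n hn => ⟨hn.1, mem_orbit _ _⟩, fun n hn k hk hnk => ?_, ?_⟩
  · by_contra hne
    exact disjoint_left.1 (disjoint_disjointed _ hne) hn.2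
      ((show g n • y = g k • y from hnk) ▸ hk.2)
  · rintro _ ⟨hzB, h, rfl⟩
    have hcover := iUnion_disjointedTranslates hg fun x => (hF x).exists
    obtain ⟨n, hn⟩ := mem_iUnion.1 (hcover.symm ▸ mem_univ (h • y))
    have hnF : (g n)⁻¹ • h • y ∈ F := mem_smul_set_iff_inv_smul_mem.1 (disjointed_subset _ n hn)
    have hback : (g n)⁻¹ • h • y = y :=
      (hF y).unique ⟨hnF, by rw [smul_smul]; exact mem_orbit _ _⟩ ⟨hy, mem_orbit_self y⟩
    have hhy : h • y = g n • y := (smul_inv_smul (g n) (h • y)).symm.trans (congrArg _ hback)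
    exact ⟨n, ⟨by rwa [← hhy], by rwa [← hhy]⟩, hhy.symm⟩

theorem tsum_indicator_preimage_smul_eq_encard (hg : g.Surjective)
    (hF : ∀ x : X, ∃! y, y ∈ F ∩ orbit G x) {y : X} (hy : y ∈ F) :
    ∑' n, ((g n • ·) ⁻¹' (B ∩ disjointedTranslates g F n)).indicator (1 : X → ℝ≥0∞) y =
      (B ∩ orbit G y).encard := by
  have hbij := bijOn_smul_inter_orbit (B := B) hg hF hy
  rw [← hbij.image_eq, hbij.injOn.encard_image, ← ENNReal.tsum_set_one]
  exact (tsum_subtype _ 1).symm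

end DisjointedTranslates

section Measure

variable {G X : Type*} [Group G] [MulAction G X] [MeasurableSpace X] {μ : Measure X}
  {F B : Set X} {g : ℕ → G}

theorem encard_inter_orbit_ae_eq_tsum (hg : g.Surjective)
    (hF : ∀ x : X, ∃! y, y ∈ F ∩ orbit G x) (hFm : MeasurableSet F) :
    (fun y => ((B ∩ orbit G y).encard : ℝ≥0∞)) =ᵐ[μ.restrict F]
      ∑' n, ((g n • ·) ⁻¹' (B ∩ disjointedTranslates g F n)).indicator 1 := by
  filter_upwards [ae_restrict_mem hFm] with y hy
  rw [ENNReal.tsum_apply, tsum_indicator_preimage_smul_eq_encard hg hF hy]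

theorem ae_restrict_encard_lt_top (hFm : MeasurableSet F)
    (hfin : ∀ y ∈ F, (B ∩ orbit G y).Finite) :
    ∀ᵐ y ∂μ.restrict F, ((B ∩ orbit G y).encard : ℝ≥0∞) < ∞ :=
  (ae_restrict_mem hFm).mono fun y hy => by simpa using (hfin y hy).encard_lt_top

variable [MeasurableConstSMul G X]

theorem measurableSet_preimage_smul_inter_disjointedTranslates (hFm : MeasurableSet F)
    (hB : MeasurableSet B) (n : ℕ) :
    MeasurableSet ((g n • ·) ⁻¹' (B ∩ disjointedTranslates g F n)) :=
  measurable_const_smul (g n) (hB.inter (.disjointed (fun k => hFm.const_smul (g k)) n))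

theorem withDensity_encard_inter_orbit_eq_sum (hg : g.Surjective)
    (hF : ∀ x : X, ∃! y, y ∈ F ∩ orbit G x) (hFm : MeasurableSet F) (hB : MeasurableSet B) :
    (μ.restrict F).withDensity (fun y => (B ∩ orbit G y).encard) =
      Measure.sum fun n => μ.restrict ((g n • ·) ⁻¹' (B ∩ disjointedTranslates g F n)) := by
  have hA := measurableSet_preimage_smul_inter_disjointedTranslates (g := g) hFm hB
  rw [withDensity_congr_ae (encard_inter_orbit_ae_eq_tsum hg hF hFm),
    withDensity_tsum fun n => measurable_one.indicator (hA n)]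
  congr 1
  funext n
  rw [withDensity_indicator_one (hA n), Measure.restrict_restrict_of_subset
    (preimage_smul_inter_disjointedTranslates_subset B n)]

theorem aemeasurable_encard_inter_orbit [Countable G] (hF : ∀ x : X, ∃! y, y ∈ F ∩ orbit G x)
    (hFm : MeasurableSet F) (hB : MeasurableSet B) :
    AEMeasurable (fun y => ((B ∩ orbit G y).encard : ℝ≥0∞)) (μ.restrict F) := by
  obtain ⟨g, hg⟩ := exists_surjective_nat G
  refine AEMeasurable.congr ?_ (encard_inter_orbit_ae_eq_tsum hg hF hFm).symm
  exact (Measurable.tsum' fun n => measurable_one.indicator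
    (measurableSet_preimage_smul_inter_disjointedTranslates (g := g) hFm hB n)).aemeasurable

theorem trim_restrict_eq_trim_withDensity_encard [Countable G] [SMulInvariantMeasure G X μ]
    (hF : ∀ x : X, ∃! y, y ∈ F ∩ orbit G x) (hFm : MeasurableSet F) (hB : MeasurableSet B) :
    (μ.restrict B).trim (smulInvariants_le G) =
      ((μ.restrict F).withDensity fun y => (B ∩ orbit G y).encard).trim (smulInvariants_le G) := by
  obtain ⟨g, hg⟩ := exists_surjective_nat G
  set P := disjointedTranslates g F
  have hPm : ∀ n, MeasurableSet (P n) := .disjointed fun k => hFm.const_smul (g k)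
  rw [withDensity_encard_inter_orbit_eq_sum hg hF hFm hB]
  refine @Measure.ext _ (smulInvariants G X) _ _ fun E hE => ?_
  obtain ⟨hEm, hEinv⟩ := measurableSet_smulInvariants.1 hE
  rw [trim_measurableSet_eq _ hE, trim_measurableSet_eq _ hE, Measure.sum_apply _ hEm,
    Measure.restrict_apply hEm]
  calc μ (E ∩ B) = μ (⋃ n, E ∩ (B ∩ P n)) := by
        rw [← inter_iUnion, ← inter_iUnion, iUnion_disjointedTranslates hg fun x => (hF x).exists,
          inter_univ]
    _ = ∑' n, μ (E ∩ (B ∩ P n)) :=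
        measure_iUnion (fun n k hnk => ((disjoint_disjointed _ hnk).mono inter_subset_right
          inter_subset_right).mono inter_subset_right inter_subset_right)
          fun n => hEm.inter (hB.inter (hPm n))
    _ = ∑' n, μ ((g n • ·) ⁻¹' (E ∩ (B ∩ P n))) := by simp only [measure_preimage_smul]
    _ = ∑' n, μ.restrict ((g n • ·) ⁻¹' (B ∩ P n)) E := by
        simp only [preimage_inter, hEinv, Measure.restrict_apply hEm]

end Measure

section Integral

variable {G X E : Type*} [Group G] [Countable G] [MulAction G X] [MeasurableSpace X]
  [MeasurableConstSMul G X] {μ : Measure X} [SMulInvariantMeasure G X μ] {F B : Set X}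
  [NormedAddCommGroup E] [NormedSpace ℝ E] [MeasurableSpace E] [BorelSpace E]
  [SecondCountableTopology E] {f : X → E}

theorem integrableOn_iff_integrable_ncard_smul (hF : ∀ x : X, ∃! y, y ∈ F ∩ orbit G x)
    (hFm : MeasurableSet F) (hB : MeasurableSet B) (hfin : ∀ y ∈ F, (B ∩ orbit G y).Finite)
    (hf : Measurable f) (hinv : ∀ (g : G) (x : X), f (g • x) = f x) :
    IntegrableOn f B μ ↔
      Integrable (fun y => ((B ∩ orbit G y).ncard : ℝ) • f y) (μ.restrict F) := by
  have hf_smulInv := (measurable_smulInvariants hf hinv).stronglyMeasurable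
  have htop := ae_restrict_encard_lt_top (μ := μ) hFm hfin
  simp only [← toReal_encard]
  rw [← integrable_withDensity_iff_integrable_smul₀' (aemeasurable_encard_inter_orbit hF hFm hB)
    htop, IntegrableOn]
  have key := trim_restrict_eq_trim_withDensity_encard (μ := μ) hF hFm hB
  exact ⟨fun h => integrable_of_integrable_trim _ (key ▸ h.trim _ hf_smulInv),
    fun h => integrable_of_integrable_trim _ (key ▸ h.trim _ hf_smulInv)⟩

theorem setIntegral_eq_integral_ncard_smul (hF : ∀ x : X, ∃! y, y ∈ F ∩ orbit G x)
    (hFm : MeasurableSet F) (hB : MeasurableSet B) (hfin : ∀ y ∈ F, (B ∩ orbit G y).Finite)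
    (hf : Measurable f) (hinv : ∀ (g : G) (x : X), f (g • x) = f x) :
    ∫ x in B, f x ∂μ = ∫ y in F, ((B ∩ orbit G y).ncard : ℝ) • f y ∂μ := by
  have hf_smulInv := (measurable_smulInvariants hf hinv).stronglyMeasurable
  have htop := ae_restrict_encard_lt_top (μ := μ) hFm hfin
  calc ∫ x in B, f x ∂μ = ∫ x, f x ∂(μ.restrict B).trim (smulInvariants_le G) :=
        integral_trim _ hf_smulInv
    _ = ∫ x, f x ∂((μ.restrict F).withDensity fun y => (B ∩ orbit G y).encard) := by
        rw [trim_restrict_eq_trim_withDensity_encard hF hFm hB, ← integral_trim _ hf_smulInv]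
    _ = ∫ y in F, ((B ∩ orbit G y).ncard : ℝ) • f y ∂μ := by
        rw [integral_withDensity_eq_integral_toReal_smul₀
          (aemeasurable_encard_inter_orbit hF hFm hB) htop]
        simp only [toReal_encard]

theorem integrableOn_of_ncard_inter_orbit_le (hF : ∀ x : X, ∃! y, y ∈ F ∩ orbit G x)
    (hFm : MeasurableSet F) (hB : MeasurableSet B) (C : ℝ)
    (hC : ∀ y ∈ F, (B ∩ orbit G y).Finite ∧ ((B ∩ orbit G y).ncard : ℝ) ≤ C)
    (hf : Measurable f) (hinv : ∀ (g : G) (x : X), f (g • x) = f x) (hfF : IntegrableOn f F μ) :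
    IntegrableOn f B μ := by
  refine (integrableOn_iff_integrable_ncard_smul hF hFm hB (fun y hy => (hC y hy).1) hf
    hinv).2 ?_
  have hmeas : AEStronglyMeasurable (fun y => ((B ∩ orbit G y).ncard : ℝ)) (μ.restrict F) := by
    simpa only [toReal_encard] using
      (aemeasurable_encard_inter_orbit hF hFm hB).ennreal_toReal.aestronglyMeasurable
  refine hfF.bdd_smul C hmeas ?_
  filter_upwards [ae_restrict_mem hFm] with y hy
  simpa using (hC y hy).2

end Integral

/-- **Lemma 3.** Integrating a `G`-invariant function over a signed fundamental domain
gives the same result as integrating over a true fundamental domain. -/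
theorem integral_over_signed_fundamental_domain
    {X : Type*} [TopologicalSpace X] [MeasurableSpace X] [BorelSpace X]
    {G : Type*} [Group G] [Countable G] [MulAction G X]
    (hcont : ∀ g : G, Continuous (fun x : X => g • x))
    {m : ℕ} (Xi : Fin m → Set X) (wt : Fin m → ℂ)
    (hXi : ∀ i, MeasurableSet (Xi i))
    (Kb : ℝ)
    (hbound : ∀ (x : X) (i : Fin m), (Xi i ∩ MulAction.orbit G x).Finite ∧
      ((Xi i ∩ MulAction.orbit G x).ncard : ℝ) ≤ Kb)
    (hsigned : ∀ x : X, ∑ i, wt i * ((Xi i ∩ MulAction.orbit G x).ncard : ℂ) = 1)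
    (μ : Measure X)
    (hμ : ∀ (g : G) (A : Set X), MeasurableSet A → μ ((fun x => g • x) ⁻¹' A) = μ A)
    (f : X → ℂ) (hf : Measurable f)
    (hfinv : ∀ (g : G) (x : X), f (g • x) = f x)
    (F : Set X) (hFmeas : MeasurableSet F)
    (hFdom : ∀ x : X, ∃! y, y ∈ F ∩ MulAction.orbit G x)
    (hfint : IntegrableOn f F μ) :
    (∀ i, IntegrableOn f (Xi i) μ) ∧
      ∫ x in F, f x ∂μ = ∑ i, wt i * ∫ x in Xi i, f x ∂μ := by
  have : MeasurableConstSMul G X := ⟨fun g => (hcont g).measurable⟩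
  have : SMulInvariantMeasure G X μ := ⟨hμ⟩
  have hint i : IntegrableOn f (Xi i) μ := integrableOn_of_ncard_inter_orbit_le hFdom hFmeas
    (hXi i) Kb (fun y _ => hbound y i) hf hfinv hfint
  have hfin i : ∀ y ∈ F, (Xi i ∩ orbit G y).Finite := fun y _ => (hbound y i).1
  refine ⟨hint, ?_⟩
  simp only [setIntegral_eq_integral_ncard_smul hFdom hFmeas (hXi _) (hfin _) hf hfinv,
    ← integral_const_mul]
  rw [← integral_finsetSum _ fun i _ => ((integrableOn_iff_integrable_ncard_smul hFdom hFmeas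
    (hXi i) (hfin i) hf hfinv).1 (hint i)).const_mul (wt i)]
  refine setIntegral_congr_fun hFmeas fun y _ => ?_
  simp only [Complex.real_smul, Complex.ofReal_natCast, ← mul_assoc, ← Finset.sum_mul, hsigned,
    one_mul]
end

section
/- If {(γ_i, w_i)}_{i=1}^m is a signed fundamental domain for the action of Ṽ on ℝ^{n−1}_+, then {(Γ_i, w_i)}_{i=1}^m is a signed fundamental domain for the action of V on ℝ^n_+, where Γ_i := {x ∈ ℝ^n_+ : ℓ(x) ∈ γ_i}. -/
open scoped Classical NumberField
open NumberField

noncomputable section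

namespace SignedDomain

variable {K : Type*} [Field K] [NumberField K] {n : ℕ}

/-- Embedding of `K` into `ℝ^(n+1)` via the real embeddings `τ`. -/
def emb (τ : Fin (n + 1) → (K →+* ℝ)) (x : K) : Fin (n + 1) → ℝ :=
  fun i => τ i x

/-- The group `E₊` of totally positive units of the ring of integers. -/
def Eplus (τ : Fin (n + 1) → (K →+* ℝ)) : Subgroup (𝓞 K)ˣ where
  carrier := {u | ∀ i, 0 < τ i ((u : 𝓞 K) : K)}
  one_mem' := by intro i; simp
  mul_mem' := by
    intro a b ha hb i
    have h : ((↑(a * b) : 𝓞 K) : K) = ((↑a : 𝓞 K) : K) * ((↑b : 𝓞 K) : K) := by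
      push_cast; ring
    simp only [Set.mem_setOf_eq] at *
    rw [h, map_mul]
    exact mul_pos (ha i) (hb i)
  inv_mem' := by
    intro a ha i
    simp only [Set.mem_setOf_eq] at *
    have h : τ i ((↑(a⁻¹) : 𝓞 K) : K) * τ i ((↑a : 𝓞 K) : K) = 1 := by
      rw [← map_mul]
      have : ((↑(a⁻¹) : 𝓞 K) : K) * ((↑a : 𝓞 K) : K) = 1 := by
        have := a.inv_mul
        calc ((↑(a⁻¹) : 𝓞 K) : K) * ((↑a : 𝓞 K) : K) = ((↑(a⁻¹ * a) : 𝓞 K) : K) := by push_cast; ring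
        _ = 1 := by rw [inv_mul_cancel]; simp
      rw [this, map_one]
    nlinarith [ha i]

/-- The subgroup generated by the chosen units. -/
def V (ε : Fin n → (𝓞 K)ˣ) : Subgroup (𝓞 K)ˣ :=
  Subgroup.closure (Set.range ε)

/-- The vectors `f_{i,σ} = ∏_{j<i} ε_{σ(j)}`, viewed in `ℝ^(n+1)`. -/
def fvec (τ : Fin (n + 1) → (K →+* ℝ)) (ε : Fin n → (𝓞 K)ˣ) (σ : Equiv.Perm (Fin n))
    (i : Fin (n + 1)) : Fin (n + 1) → ℝ :=
  fun l => ∏ j ∈ Finset.univ.filter (fun j : Fin n => (j : ℕ) < (i : ℕ)), τ l ((ε (σ j) : 𝓞 K) : K)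

/-- The matrix with columns `Log ε_i` (first `n` coordinates of the logarithmic embedding). -/
def LogMat (τ : Fin (n + 1) → (K →+* ℝ)) (ε : Fin n → (𝓞 K)ˣ) : Matrix (Fin n) (Fin n) ℝ :=
  Matrix.of fun l i => Real.log (τ (Fin.castSucc l) ((ε i : 𝓞 K) : K))

/-- The matrix with columns `f_{1,σ},…,f_{n+1,σ}`. -/
def Fmat (τ : Fin (n + 1) → (K →+* ℝ)) (ε : Fin n → (𝓞 K)ˣ) (σ : Equiv.Perm (Fin n)) :
    Matrix (Fin (n + 1)) (Fin (n + 1)) ℝ :=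
  Matrix.of fun l i => fvec τ ε σ i l

/-- The weight `w_σ`. -/
def w (τ : Fin (n + 1) → (K →+* ℝ)) (ε : Fin n → (𝓞 K)ˣ) (σ : Equiv.Perm (Fin n)) : ℝ :=
  ((-1 : ℝ) ^ n * ((Equiv.Perm.sign σ : ℤ) : ℝ) * Real.sign (Fmat τ ε σ).det) /
    Real.sign (LogMat τ ε).det

/-- The last standard basis vector `e_n` of `ℝ^(n+1)`. -/
def en : Fin (n + 1) → ℝ := fun i => if i = Fin.last n then 1 else 0

/-- `e_n` lies in the open half-space `H_{i,σ}^+` (on the same side as `f_{i,σ}`):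
when the `f_{j,σ}` form a basis this says that the `i`-th coordinate of `e_n`
with respect to this basis is positive. -/
def posSide (τ : Fin (n + 1) → (K →+* ℝ)) (ε : Fin n → (𝓞 K)ˣ) (σ : Equiv.Perm (Fin n))
    (i : Fin (n + 1)) : Prop :=
  ∃ c : Fin (n + 1) → ℝ, (en = ∑ j, c j • fvec τ ε σ j) ∧ 0 < c i

/-- The coefficient range `R_{i,σ}`. -/
def Rset (τ : Fin (n + 1) → (K →+* ℝ)) (ε : Fin n → (𝓞 K)ˣ) (σ : Equiv.Perm (Fin n))
    (i : Fin (n + 1)) : Set ℝ :=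
  if posSide τ ε σ i then Set.Ici 0 else Set.Ioi 0

/-- The (partly open) cone `C_σ`; empty when `w_σ = 0`. -/
def Cone (τ : Fin (n + 1) → (K →+* ℝ)) (ε : Fin n → (𝓞 K)ˣ) (σ : Equiv.Perm (Fin n)) :
    Set (Fin (n + 1) → ℝ) :=
  if w τ ε σ ≠ 0 then
    {x | ∃ c : Fin (n + 1) → ℝ, (∀ i, c i ∈ Rset τ ε σ i) ∧ x = ∑ j, c j • fvec τ ε σ j}
  else ∅

/-- The orbit `V·x` of `x ∈ ℝ^(n+1)` under the componentwise action of `V`. -/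
def orbit (τ : Fin (n + 1) → (K →+* ℝ)) (ε : Fin n → (𝓞 K)ˣ) (x : Fin (n + 1) → ℝ) :
    Set (Fin (n + 1) → ℝ) :=
  {y | ∃ u ∈ V ε, y = emb τ ((u : 𝓞 K) : K) * x}

/-- The positive orthant of `ℝ^m`. -/
def posOrthant (m : ℕ) : Set (Fin m → ℝ) := {x | ∀ i, 0 < x i}

/-- The projection `ℓ(x) = (x₁/xₙ, …, x_{n-1}/xₙ)`. -/
def ell (x : Fin (n + 1) → ℝ) : Fin n → ℝ :=
  fun j => x (Fin.castSucc j) / x (Fin.last n)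

/-- The vertices `φ_{i,σ} = ℓ(f_{i+1,σ})`. -/
def phi (τ : Fin (n + 1) → (K →+* ℝ)) (ε : Fin n → (𝓞 K)ˣ) (σ : Equiv.Perm (Fin n))
    (i : Fin (n + 1)) : Fin n → ℝ :=
  ell (fvec τ ε σ i)

/-- The coefficient range `J_{i,σ}`. -/
def Jset (τ : Fin (n + 1) → (K →+* ℝ)) (ε : Fin n → (𝓞 K)ˣ) (σ : Equiv.Perm (Fin n))
    (i : Fin (n + 1)) : Set ℝ :=
  if posSide τ ε σ i then Set.Icc 0 1 else Set.Ioc 0 1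

/-- The (partly open) simplex `c_σ`; empty when `w_σ = 0`. -/
def simplex (τ : Fin (n + 1) → (K →+* ℝ)) (ε : Fin n → (𝓞 K)ˣ) (σ : Equiv.Perm (Fin n)) :
    Set (Fin n → ℝ) :=
  if w τ ε σ ≠ 0 then
    {y | ∃ b : Fin (n + 1) → ℝ, (∑ i, b i = 1) ∧ (∀ i, b i ∈ Jset τ ε σ i) ∧
      y = ∑ i, b i • phi τ ε σ i}
  else ∅

/-- The orbit `Ṽ·y` of `y ∈ ℝ^n` under the componentwise action of `Ṽ = ℓ(V)`. -/
def torbit (τ : Fin (n + 1) → (K →+* ℝ)) (ε : Fin n → (𝓞 K)ˣ) (y : Fin n → ℝ) :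
    Set (Fin n → ℝ) :=
  {z | ∃ u ∈ V ε, z = ell (emb τ ((u : 𝓞 K) : K)) * y}

/- Proof idea: `ℓ` is multiplicative and sends `V·x` onto `Ṽ·ℓ(x)`, so it maps `Γ_i ∩ V·x` onto
`γ_i ∩ Ṽ·ℓ(x)`. It is injective there: if `ℓ(u x) = ℓ(u' x)` then all real conjugates of
`u u'⁻¹` equal one positive number `c`, whence `c ^ [k : ℚ] = |N(u u'⁻¹)| = 1`, so `u = u'`.
The counts, and hence the bound and the weighted sum, are therefore the same upstairs and
downstairs. -/

section Norm

variable {ι : Type*} [Fintype ι]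

theorem algebraMap_norm_eq_prod_of_injective (τ : ι → (K →+* ℝ)) (hτ : Function.Injective τ)
    (hcard : Fintype.card ι = Module.finrank ℚ K) (x : K) :
    ((Algebra.norm ℚ x : ℚ) : ℝ) = ∏ i, τ i x := by
  let e : ι → (K →+* ℂ) := fun i => Complex.ofRealHom.comp (τ i)
  have he : Function.Bijective e := by
    refine (Fintype.bijective_iff_injective_and_card e).mpr ⟨fun i j h => hτ ?_, ?_⟩
    · ext x
      exact Complex.ofReal_injective (RingHom.congr_fun h x)
    · rw [NumberField.Embeddings.card K ℂ, hcard]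
  apply Complex.ofReal_injective
  calc (((Algebra.norm ℚ x : ℚ) : ℝ) : ℂ) = algebraMap ℚ ℂ (Algebra.norm ℚ x) := by simp
    _ = ∏ φ : K →ₐ[ℚ] ℂ, φ x := Algebra.norm_eq_prod_embeddings ℚ ℂ x
    _ = ∏ φ : K →+* ℂ, φ x :=
      Fintype.prod_equiv (RingHom.equivRatAlgHom K ℂ).symm _ _ (fun _ => rfl)
    _ = ∏ i, e i x := ((Equiv.ofBijective e he).prod_comp (fun φ : K →+* ℂ => φ x)).symm
    _ = ((∏ i, τ i x : ℝ) : ℂ) := by simp [e]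

theorem unit_eq_one_of_forall_eq_const (τ : ι → (K →+* ℝ)) (hτ : Function.Injective τ)
    (hcard : Fintype.card ι = Module.finrank ℚ K) {v : (𝓞 K)ˣ} {c : ℝ} (hc : 0 ≤ c)
    (hv : ∀ i, τ i (v : K) = c) : v = 1 := by
  have hι : Fintype.card ι ≠ 0 := hcard ▸ Module.finrank_pos.ne'
  have hc1 : c = 1 := by
    rw [← pow_eq_one_iff_of_nonneg hc hι, ← abs_of_nonneg (pow_nonneg hc _)]
    have := algebraMap_norm_eq_prod_of_injective τ hτ hcard (v : K)
    simp only [hv, Finset.prod_const, Finset.card_univ] at this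
    rw [← this, ← Rat.cast_abs, NumberField.Units.norm, Rat.cast_one]
  obtain ⟨i⟩ : Nonempty ι := Fintype.card_pos_iff.mp (Nat.pos_of_ne_zero hι)
  have : (v : K) = 1 := (τ i).injective (by rw [hv, hc1, map_one])
  exact Units.ext (RingOfIntegers.coe_injective (by simpa using this))

end Norm

omit [NumberField K] in
theorem V_le_Eplus (τ : Fin (n + 1) → (K →+* ℝ)) (ε : Fin n → (𝓞 K)ˣ)
    (hpos : ∀ i, ε i ∈ Eplus τ) : V ε ≤ Eplus τ :=
  (Subgroup.closure_le _).mpr (Set.range_subset_iff.mpr hpos)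

omit [NumberField K] in
theorem emb_mul (τ : Fin (n + 1) → (K →+* ℝ)) (x y : K) :
    emb τ (x * y) = emb τ x * emb τ y :=
  funext fun i => map_mul (τ i) x y

theorem ell_mul (a x : Fin (n + 1) → ℝ) : ell (a * x) = ell a * ell x :=
  funext fun _ => mul_div_mul_comm _ _ _ _

theorem ell_mem_posOrthant {x : Fin (n + 1) → ℝ} (hx : x ∈ posOrthant (n + 1)) :
    ell x ∈ posOrthant n :=
  fun _ => div_pos (hx _) (hx _)

theorem eq_last_of_ell_eq_one {a : Fin (n + 1) → ℝ} (h : ell a = 1) (ha : a (Fin.last n) ≠ 0)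
    (i : Fin (n + 1)) : a i = a (Fin.last n) := by
  induction i using Fin.lastCases with
  | last => rfl
  | cast j => exact (div_eq_one_iff_eq ha).mp (congrFun h j)

theorem eq_of_ell_emb_mul_eq (τ : Fin (n + 1) → (K →+* ℝ)) (hτ : Function.Injective τ)
    (hdeg : Module.finrank ℚ K = n + 1) (ε : Fin n → (𝓞 K)ˣ) (hpos : ∀ i, ε i ∈ Eplus τ)
    {u u' : (𝓞 K)ˣ} (hu : u ∈ V ε) (hu' : u' ∈ V ε) {x : Fin (n + 1) → ℝ}
    (hx : x ∈ posOrthant (n + 1))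
    (h : ell (emb τ ((u : 𝓞 K) : K) * x) = ell (emb τ ((u' : 𝓞 K) : K) * x)) : u = u' := by
  set v := u * u'⁻¹
  have hv : v ∈ V ε := mul_mem hu (inv_mem hu')
  have hv_pos : ∀ i, 0 < τ i ((v : 𝓞 K) : K) := V_le_Eplus τ ε hpos hv
  have hu_eq : emb τ ((u : 𝓞 K) : K) = emb τ ((v : 𝓞 K) : K) * emb τ ((u' : 𝓞 K) : K) := by
    rw [← emb_mul, show u = v * u' from (inv_mul_cancel_right u u').symm]
    push_cast
    rfl
  have hy : ell (emb τ ((u' : 𝓞 K) : K) * x) ∈ posOrthant n :=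
    ell_mem_posOrthant fun i => mul_pos (V_le_Eplus τ ε hpos hu' i) (hx i)
  rw [hu_eq, mul_assoc, ell_mul] at h
  have hv_ell : ell (emb τ ((v : 𝓞 K) : K)) = 1 :=
    funext fun j => mul_right_cancel₀ (hy j).ne' (by simpa using congrFun h j)
  have hv_one : v = 1 :=
    unit_eq_one_of_forall_eq_const τ hτ (by rw [Fintype.card_fin, hdeg]) (hv_pos _).le
      (eq_last_of_ell_eq_one hv_ell (hv_pos _).ne')
  exact mul_inv_eq_one.mp hv_one

theorem bijOn_ell_inter_orbit (τ : Fin (n + 1) → (K →+* ℝ)) (hτ : Function.Injective τ)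
    (hdeg : Module.finrank ℚ K = n + 1) (ε : Fin n → (𝓞 K)ˣ) (hpos : ∀ i, ε i ∈ Eplus τ)
    (γ : Set (Fin n → ℝ)) {x : Fin (n + 1) → ℝ} (hx : x ∈ posOrthant (n + 1)) :
    Set.BijOn ell ({z ∈ posOrthant (n + 1) | ell z ∈ γ} ∩ orbit τ ε x)
      (γ ∩ torbit τ ε (ell x)) := by
  refine ⟨?_, ?_, ?_⟩
  · rintro _ ⟨⟨-, hzγ⟩, u, hu, rfl⟩
    exact ⟨hzγ, u, hu, ell_mul _ _⟩
  · rintro _ ⟨-, u, hu, rfl⟩ _ ⟨-, u', hu', rfl⟩ h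
    rw [eq_of_ell_emb_mul_eq τ hτ hdeg ε hpos hu hu' hx h]
  · rintro _ ⟨hγ, u, hu, rfl⟩
    refine ⟨emb τ ((u : 𝓞 K) : K) * x, ⟨⟨?_, ?_⟩, u, hu, rfl⟩, ell_mul _ _⟩
    · exact fun i => mul_pos (V_le_Eplus τ ε hpos hu i) (hx i)
    · rwa [ell_mul]

theorem signed_fundamental_domain_lift_general
    {K : Type*} [Field K] [NumberField K] {n : ℕ}
    (τ : Fin (n + 1) → (K →+* ℝ)) (hτ : Function.Injective τ)
    (hdeg : Module.finrank ℚ K = n + 1)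
    (ε : Fin n → (𝓞 K)ˣ) (hpos : ∀ i, ε i ∈ Eplus τ)
    {m : ℕ} (γ : Fin m → Set (Fin n → ℝ)) (wt : Fin m → ℂ)
    (B : ℕ)
    (hbound : ∀ y ∈ posOrthant n, ∀ i : Fin m,
      (γ i ∩ torbit τ ε y).Finite ∧ (γ i ∩ torbit τ ε y).ncard ≤ B)
    (hsigned : ∀ y ∈ posOrthant n,
      ∑ i, wt i * ((γ i ∩ torbit τ ε y).ncard : ℂ) = 1) :
    (∀ x ∈ posOrthant (n + 1), ∀ i : Fin m,
      ({z ∈ posOrthant (n + 1) | ell z ∈ γ i} ∩ orbit τ ε x).Finite ∧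
      ({z ∈ posOrthant (n + 1) | ell z ∈ γ i} ∩ orbit τ ε x).ncard ≤ B) ∧
    ∀ x ∈ posOrthant (n + 1),
      ∑ i, wt i * (({z ∈ posOrthant (n + 1) | ell z ∈ γ i} ∩ orbit τ ε x).ncard : ℂ) = 1 := by
  have hbij := fun x (hx : x ∈ posOrthant (n + 1)) i =>
    bijOn_ell_inter_orbit τ hτ hdeg ε hpos (γ i) hx
  refine ⟨fun x hx i => ?_, fun x hx => ?_⟩
  · rw [(hbij x hx i).finite_iff_finite, (hbij x hx i).ncard_eq]
    exact hbound _ (ell_mem_posOrthant hx) i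
  · simp_rw [(hbij x hx _).ncard_eq]
    exact hsigned _ (ell_mem_posOrthant hx)

/-- **Lemma 6.** A signed fundamental domain for the action of `Ṽ` on `ℝ^n_+` lifts through
`ℓ` to a signed fundamental domain for the action of `V` on `ℝ^{n+1}_+`. -/
theorem signed_fundamental_domain_lift
    {K : Type*} [Field K] [NumberField K] {n : ℕ} (hn : 1 ≤ n)
    (τ : Fin (n + 1) → (K →+* ℝ)) (hτ : Function.Injective τ)
    (hdeg : Module.finrank ℚ K = n + 1)
    (ε : Fin n → (𝓞 K)ˣ) (hpos : ∀ i, ε i ∈ Eplus τ)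
    {m : ℕ} (γ : Fin m → Set (Fin n → ℝ)) (wt : Fin m → ℂ)
    (B : ℕ)
    (hbound : ∀ y ∈ posOrthant n, ∀ i : Fin m,
      (γ i ∩ torbit τ ε y).Finite ∧ (γ i ∩ torbit τ ε y).ncard ≤ B)
    (hsigned : ∀ y ∈ posOrthant n,
      ∑ i, wt i * ((γ i ∩ torbit τ ε y).ncard : ℂ) = 1) :
    (∀ x ∈ posOrthant (n + 1), ∀ i : Fin m,
      ({z ∈ posOrthant (n + 1) | ell z ∈ γ i} ∩ orbit τ ε x).Finite ∧
      ({z ∈ posOrthant (n + 1) | ell z ∈ γ i} ∩ orbit τ ε x).ncard ≤ B) ∧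
    ∀ x ∈ posOrthant (n + 1),
      ∑ i, wt i * (({z ∈ posOrthant (n + 1) | ell z ∈ γ i} ∩ orbit τ ε x).ncard : ℂ) = 1 :=
  signed_fundamental_domain_lift_general τ hτ hdeg ε hpos γ wt B hbound hsigned

end SignedDomain
end
end

section
/- Let Q ⊆ k ⊆ R be a tower of fields with k/Q a finite separable extension of degree n, let τ_1,…,τ_n : k → R be the n distinct field homomorphisms of k into R fixing Q, and define J : k → R^n by (J(v))^{(i)} := τ_i(v). Then for any v_1,…,v_ℓ ∈ k with ℓ < n, the vector e_n := (0,0,…,0,1) ∈ R^n is not contained in the R-subspace R·J(v_1) + R·J(v_2) + … + R·J(v_ℓ) ⊆ R^n. -/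
/-!
Since `l < n`, some `z ≠ 0` in `k` is trace-orthogonal to every `vᵢ`. As the `τⱼ` are all the
embeddings of `k`, the trace is `∑ⱼ τⱼ`, so the covector `(τⱼ z)ⱼ` is orthogonal to every `J(vᵢ)`:
`∑ⱼ τⱼ z · τⱼ vᵢ = Tr(z vᵢ) = 0`. It is not orthogonal to `eₙ`, since `τₙ z ≠ 0`.
-/

open Module Matrix

theorem sum_algHom_eq_algebraMap_trace {K L F ι : Type*} [Field K] [Field L] [Field F]
    [Algebra K L] [Algebra K F] [FiniteDimensional K L] [Algebra.IsSeparable K L] [Fintype ι]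
    (σ : ι → (L →ₐ[K] F)) (hσ : Function.Injective σ) (hcard : Fintype.card ι = finrank K L)
    (x : L) : ∑ i, σ i x = algebraMap K F (Algebra.trace K L x) := by
  let E := AlgebraicClosure F
  let toE : F →ₐ[K] E := IsScalarTower.toAlgHom K F E
  have hbij : Function.Bijective fun i => toE.comp (σ i) := by
    rw [Fintype.bijective_iff_injective_and_card, AlgHom.card, hcard]
    exact ⟨fun i j h => hσ <| AlgHom.ext fun y => toE.toRingHom.injective (AlgHom.congr_fun h y),
      rfl⟩
  apply (algebraMap F E).injective
  calc algebraMap F E (∑ i, σ i x) = ∑ i, toE.comp (σ i) x := map_sum _ _ _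
    _ = ∑ τ : L →ₐ[K] E, τ x := Fintype.sum_bijective _ hbij _ _ fun _ => rfl
    _ = algebraMap K E (Algebra.trace K L x) := (trace_eq_sum_embeddings E).symm
    _ = algebraMap F E (algebraMap K F (Algebra.trace K L x)) :=
      IsScalarTower.algebraMap_apply K F E _

theorem exists_ne_zero_forall_dual_apply_eq_zero {K V ι : Type*} [Field K] [AddCommGroup V]
    [Module K V] [FiniteDimensional K V] [Fintype ι] (f : ι → Dual K V)
    (hcard : Fintype.card ι < finrank K V) : ∃ z : V, z ≠ 0 ∧ ∀ i, f i z = 0 := by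
  have hker : LinearMap.ker (LinearMap.pi f) ≠ ⊥ :=
    LinearMap.ker_ne_bot_of_finrank_lt (by simpa using hcard)
  obtain ⟨z, hz, hz0⟩ := Submodule.exists_mem_ne_zero_of_ne_bot hker
  exact ⟨z, hz0, fun i => congrFun (LinearMap.mem_ker.mp hz) i⟩

theorem single_one_notMem_span_of_dotProduct_eq_zero {R ι κ : Type*} [CommSemiring R] [Fintype ι]
    [DecidableEq ι] {c : ι → R} {j : ι} (hc : c j ≠ 0) {w : κ → ι → R}
    (hw : ∀ i, c ⬝ᵥ w i = 0) : Pi.single j 1 ∉ Submodule.span R (Set.range w) := by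
  have hspan : Submodule.span R (Set.range w) ≤ LinearMap.ker (dotProductBilin R R c) :=
    Submodule.span_le.mpr <| Set.range_subset_iff.mpr hw
  exact fun hmem => hc (by simpa using hspan hmem)

/-- **Lemma 8.** If `k/Q` is a finite separable extension of degree `n = m+1` inside a field
`R`, with all `n` distinct `Q`-homomorphisms `τ_i : k → R`, then the last standard basis
vector of `R^n` is not in the `R`-span of fewer than `n` vectors of the form
`J(v) = (τ_1 v, …, τ_n v)`. -/
theorem standard_vector_not_in_span_of_conjugate_vectors
    {Q k R : Type*} [Field Q] [Field k] [Field R]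
    [Algebra Q k] [Algebra Q R] [Algebra.IsSeparable Q k]
    {m : ℕ} (hdeg : Module.finrank Q k = m + 1)
    (τ : Fin (m + 1) → (k →ₐ[Q] R)) (hτ : Function.Injective τ)
    {l : ℕ} (hl : l < m + 1) (v : Fin l → k) :
    (Pi.single (Fin.last m) 1 : Fin (m + 1) → R) ∉
      Submodule.span R (Set.range fun i : Fin l => (fun j : Fin (m + 1) => τ j (v i))) := by
  have : FiniteDimensional Q k := .of_finrank_pos (by omega)
  obtain ⟨z, hz0, hz⟩ := exists_ne_zero_forall_dual_apply_eq_zero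
    (fun i => (Algebra.traceForm Q k).flip (v i)) (by simpa [hdeg] using hl)
  refine single_one_notMem_span_of_dotProduct_eq_zero (c := fun j => τ j z)
    ((map_ne_zero _).mpr hz0) fun i => ?_
  calc (fun j => τ j z) ⬝ᵥ (fun j => τ j (v i)) = ∑ j, τ j (z * v i) := by
        simp only [dotProduct, map_mul]
    _ = 0 := by
        rw [sum_algHom_eq_algebraMap_trace τ hτ (by simp [hdeg])]
        simpa using congrArg (algebraMap Q R) (hz i)
end

section
/- For every σ ∈ S_{n−1} with w_σ ≠ 0, the cone C_σ equals {x ∈ ℝ^n_+ : ℓ(x) ∈ c_σ}. -/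
/-!
Every `f_{i,σ}` has positive coordinates and `w_σ ≠ 0` makes them a basis. As `e_n` has a
zero coordinate, its coordinates in this basis cannot all be positive, so some `R_{i,σ}` is
open and every point of `C_σ` lies in `ℝ^n_+`. For `x` with `x^{(n)} > 0`, the identity
`x = ∑ c_i f_{i,σ}` is equivalent to `ℓ(x) = ∑ b_i φ_{i-1,σ}` with `∑ b_i = 1`, where
`b_i x^{(n)} = c_i f_{i,σ}^{(n)}`; this rescaling by positive factors matches `R_{i,σ}` with
`J_{i,σ}`.
-/

open scoped Classical NumberField
open NumberField

noncomputable section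

namespace SignedDomain

variable {K : Type*} [Field K] [NumberField K] {n : ℕ}

section Projection

variable {ι : Type*} [Fintype ι]

lemma apply_castSucc_eq_mul_ell {x : Fin (n + 1) → ℝ} (hx : x (Fin.last n) ≠ 0) (j : Fin n) :
    x j.castSucc = x (Fin.last n) * ell x j := by
  rw [ell, mul_div_cancel₀ _ hx]

lemma eq_sum_smul_iff_ell_eq {f : ι → Fin (n + 1) → ℝ} (hf : ∀ i, f i (Fin.last n) ≠ 0)
    {x : Fin (n + 1) → ℝ} (hx : x (Fin.last n) ≠ 0) {b c : ι → ℝ}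
    (hbc : ∀ i, b i * x (Fin.last n) = c i * f i (Fin.last n)) :
    x = ∑ i, c i • f i ↔ ∑ i, b i = 1 ∧ ell x = ∑ i, b i • ell (f i) := by
  have hlast : (∑ i, c i • f i) (Fin.last n) = x (Fin.last n) * ∑ i, b i := by
    simp only [Finset.sum_apply, Pi.smul_apply, smul_eq_mul, Finset.mul_sum, ← hbc, mul_comm]
  have hinit (j : Fin n) :
      (∑ i, c i • f i) j.castSucc = x (Fin.last n) * (∑ i, b i • ell (f i)) j := by
    simp only [Finset.sum_apply, Pi.smul_apply, smul_eq_mul, Finset.mul_sum,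
      apply_castSucc_eq_mul_ell (hf _), ← mul_assoc, ← hbc]
    exact Finset.sum_congr rfl fun i _ => by ring
  have hsum : x (Fin.last n) = x (Fin.last n) * ∑ i, b i ↔ ∑ i, b i = 1 := by
    rw [eq_comm, mul_eq_left₀ hx]
  rw [funext_iff, Fin.forall_fin_succ', hlast, hsum, and_comm, funext_iff]
  simp only [hinit, apply_castSucc_eq_mul_ell hx, mul_right_inj' hx]

lemma sum_smul_apply_pos {f : ι → Fin (n + 1) → ℝ} {l : Fin (n + 1)} (hf : ∀ i, 0 < f i l)
    {c : ι → ℝ} (hc : ∀ i, 0 ≤ c i) {i₀ : ι} (hi₀ : 0 < c i₀) :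
    0 < (∑ i, c i • f i) l := by
  simp only [Finset.sum_apply, Pi.smul_apply, smul_eq_mul]
  exact Finset.sum_pos' (fun i _ => mul_nonneg (hc i) (hf i).le)
    ⟨i₀, Finset.mem_univ _, mul_pos hi₀ (hf i₀)⟩

end Projection

section Cone

variable {K : Type*} [Field K] {n : ℕ}
  {τ : Fin (n + 1) → (K →+* ℝ)} {ε : Fin n → (𝓞 K)ˣ} {σ : Equiv.Perm (Fin n)}

lemma fvec_pos (hpos : ∀ i, ε i ∈ Eplus τ) (i l : Fin (n + 1)) : 0 < fvec τ ε σ i l :=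
  Finset.prod_pos fun j _ => hpos (σ j) l

lemma Fmat_mulVec (c : Fin (n + 1) → ℝ) :
    (Fmat τ ε σ).mulVec c = ∑ j, c j • fvec τ ε σ j := by
  ext l
  simp only [Matrix.mulVec, dotProduct, Fmat, Matrix.of_apply, Finset.sum_apply,
    Pi.smul_apply, smul_eq_mul, mul_comm]

lemma isUnit_Fmat (hσ : w τ ε σ ≠ 0) : IsUnit (Fmat τ ε σ) := by
  refine (Matrix.isUnit_iff_isUnit_det _).2 (isUnit_iff_ne_zero.2 fun h => hσ ?_)
  simp [w, h]

lemma nonneg_of_mem_Rset {i : Fin (n + 1)} {c : ℝ} (hc : c ∈ Rset τ ε σ i) : 0 ≤ c := by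
  unfold Rset at hc
  split_ifs at hc
  exacts [hc, le_of_lt hc]

lemma mem_Rset_iff_of_mul_eq {i : Fin (n + 1)} {b c s t : ℝ} (hs : 0 < s) (ht : 0 < t)
    (h : b * s = c * t) : b ∈ Rset τ ε σ i ↔ c ∈ Rset τ ε σ i := by
  have hb : 0 ≤ b ↔ 0 ≤ c := by
    rw [← mul_nonneg_iff_of_pos_right hs, h, mul_nonneg_iff_of_pos_right ht]
  have hb' : 0 < b ↔ 0 < c := by
    rw [← mul_pos_iff_of_pos_right hs, h, mul_pos_iff_of_pos_right ht]
  unfold Rset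
  split_ifs
  exacts [hb, hb']

lemma mem_Jset_iff {i : Fin (n + 1)} {b : ℝ} :
    b ∈ Jset τ ε σ i ↔ b ∈ Rset τ ε σ i ∧ b ≤ 1 := by
  unfold Jset Rset
  split_ifs <;> rfl

lemma exists_not_posSide (hn : 1 ≤ n) (hpos : ∀ i, ε i ∈ Eplus τ) (hσ : w τ ε σ ≠ 0) :
    ∃ i, ¬ posSide τ ε σ i := by
  obtain ⟨d, hd⟩ := Matrix.mulVec_surjective_iff_isUnit.2 (isUnit_Fmat hσ) en
  obtain ⟨i, hi⟩ : ∃ i, d i ≤ 0 := by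
    by_contra! hd_pos
    have h := sum_smul_apply_pos (l := Fin.castSucc ⟨0, hn⟩)
      (fun i => fvec_pos (σ := σ) hpos i _) (fun i => (hd_pos i).le) (hd_pos 0)
    rw [← Fmat_mulVec, hd] at h
    simp [en, Nat.one_le_iff_ne_zero.1 hn] at h
  refine ⟨i, fun ⟨c, hc, hci⟩ => ?_⟩
  have hcd : c = d :=
    Matrix.mulVec_injective_iff_isUnit.2 (isUnit_Fmat hσ) (by rw [Fmat_mulVec, ← hc, hd])
  exact hi.not_gt (hcd ▸ hci)

lemma cone_subset_posOrthant (hn : 1 ≤ n) (hpos : ∀ i, ε i ∈ Eplus τ)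
    (hσ : w τ ε σ ≠ 0) :
    Cone τ ε σ ⊆ posOrthant (n + 1) := by
  rintro _ hx l
  obtain ⟨c, hc, rfl⟩ := by simpa only [Cone, if_pos hσ] using hx
  obtain ⟨i₀, hi₀⟩ := exists_not_posSide hn hpos hσ
  have hci₀ : 0 < c i₀ := by simpa only [Rset, if_neg hi₀, Set.mem_Ioi] using hc i₀
  exact sum_smul_apply_pos (fun i => fvec_pos hpos i l) (fun i => nonneg_of_mem_Rset (hc i)) hci₀

lemma mem_cone_iff_ell_mem_simplex (hpos : ∀ i, ε i ∈ Eplus τ) (hσ : w τ ε σ ≠ 0)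
    {x : Fin (n + 1) → ℝ} (hx : 0 < x (Fin.last n)) :
    x ∈ Cone τ ε σ ↔ ell x ∈ simplex τ ε σ := by
  have hf i := fvec_pos (σ := σ) hpos i (Fin.last n)
  simp only [Cone, simplex, if_pos hσ, Set.mem_ofPred_eq, phi]
  constructor
  · rintro ⟨c, hc, hxc⟩
    set b := fun i => c i * (fvec τ ε σ i (Fin.last n) / x (Fin.last n))
    have hbc i : b i * x (Fin.last n) = c i * fvec τ ε σ i (Fin.last n) := by
      simp only [b]
      field_simp
    have hbR i : b i ∈ Rset τ ε σ i := (mem_Rset_iff_of_mul_eq hx (hf i) (hbc i)).2 (hc i)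
    obtain ⟨hb1, hell⟩ := (eq_sum_smul_iff_ell_eq (fun i => (hf i).ne') hx.ne' hbc).1 hxc
    refine ⟨b, hb1, fun i => mem_Jset_iff.2 ⟨hbR i, ?_⟩, hell⟩
    exact hb1 ▸ Finset.single_le_sum (fun j _ => nonneg_of_mem_Rset (hbR j)) (Finset.mem_univ i)
  · rintro ⟨b, hb1, hbJ, hell⟩
    set c := fun i => b i * (x (Fin.last n) / fvec τ ε σ i (Fin.last n))
    have hbc i : b i * x (Fin.last n) = c i * fvec τ ε σ i (Fin.last n) := by
      simp only [c]
      field_simp [(hf i).ne']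
    exact ⟨c, fun i => (mem_Rset_iff_of_mul_eq hx (hf i) (hbc i)).1 (mem_Jset_iff.1 (hbJ i)).1,
      (eq_sum_smul_iff_ell_eq (fun i => (hf i).ne') hx.ne' hbc).2 ⟨hb1, hell⟩⟩

end Cone

theorem cone_eq_ell_preimage_simplex_general
    {K : Type*} [Field K] {n : ℕ} (hn : 1 ≤ n)
    (τ : Fin (n + 1) → (K →+* ℝ))
    (ε : Fin n → (𝓞 K)ˣ) (hpos : ∀ i, ε i ∈ Eplus τ)
    (σ : Equiv.Perm (Fin n)) (hσ : w τ ε σ ≠ 0) :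
    Cone τ ε σ = {x ∈ posOrthant (n + 1) | ell x ∈ simplex τ ε σ} := by
  ext x
  constructor
  · intro hx
    have hxpos := cone_subset_posOrthant hn hpos hσ hx
    exact ⟨hxpos, (mem_cone_iff_ell_mem_simplex hpos hσ (hxpos _)).1 hx⟩
  · rintro ⟨hxpos, hx⟩
    exact (mem_cone_iff_ell_mem_simplex hpos hσ (hxpos _)).2 hx

/-- The cone `C_σ` is exactly the set of positive vectors projecting under `ℓ`
into the simplex `c_σ`. -/
theorem cone_eq_ell_preimage_simplex
    {K : Type*} [Field K] [NumberField K] {n : ℕ} (hn : 1 ≤ n)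
    (τ : Fin (n + 1) → (K →+* ℝ)) (hτ : Function.Injective τ)
    (hdeg : Module.finrank ℚ K = n + 1)
    (ε : Fin n → (𝓞 K)ˣ) (hpos : ∀ i, ε i ∈ Eplus τ)
    (σ : Equiv.Perm (Fin n)) (hσ : w τ ε σ ≠ 0) :
    Cone τ ε σ = {x ∈ posOrthant (n + 1) | ell x ∈ simplex τ ε σ} :=
  cone_eq_ell_preimage_simplex_general hn τ ε hpos σ hσ

end SignedDomain
end
end

section
/- There is a continuous map f : I^{n−1} → ℝ^{n−1}_+ with the following properties: (i) for each σ ∈ S_{n−1}, f restricted to D_σ equals the unique affine map A_σ : ℝ^{n−1} → ℝ^{n−1} satisfying A_σ(v_{i,σ}) = ℓ(f_{i+1,σ}) for 0 ≤ i ≤ n−1; (ii) if x ∈ I^{n−1} and x + e_i ∈ I^{n−1} for some standard basis vector e_i of ℝ^{n−1}, then f(x + e_i) = ε̃_i · f(x) (componentwise product); (iii) if x = ∑_{i=1}^{n−1} b_i e_i is a vertex of the cube (each b_i ∈ {0,1}), then f(x) = ∏_{i=1}^{n−1} ε̃_i^{b_i}. -/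
open scoped Classical NumberField
open NumberField

noncomputable section

namespace SignedDomain

variable {K : Type*} [Field K] [NumberField K] {n : ℕ}

/-- The unit cube `[0,1]^n`. -/
def cube (m : ℕ) : Set (Fin m → ℝ) := {x | ∀ i, x i ∈ Set.Icc (0 : ℝ) 1}

/-- The simplex `D_σ = {x ∈ [0,1]^n : x_{σ(1)} ≥ x_{σ(2)} ≥ … ≥ x_{σ(n)}}`. -/
def Dsimp {m : ℕ} (σ : Equiv.Perm (Fin m)) : Set (Fin m → ℝ) :=
  {x ∈ cube m | ∀ j j' : Fin m, j ≤ j' → x (σ j') ≤ x (σ j)}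

/-- The vertices `v_{i,σ} = ∑_{j<i} e_{σ(j)}` of `D_σ`. -/
def vtx {m : ℕ} (σ : Equiv.Perm (Fin m)) (i : Fin (m + 1)) : Fin m → ℝ :=
  fun l => if ((σ.symm l : ℕ) < (i : ℕ)) then 1 else 0

/-!
The map is the Lovász extension of the set function `g S = ∏_{i ∈ S} ε̃_i` (valued in `ℝ^{n-1}`
with the componentwise product): `f x = ∑_S μ_S(x) • g S`, where
`μ_S(x) = max 0 (min(1, min_{a ∈ S} x_a) - max(0, max_{b ∉ S} x_b))` is the barycentric coordinate
of `x` at the vertex `1_S` in the Kuhn triangulation of the cube into the simplices `D_σ`.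
On `D_σ` only the prefix sets `{σ(1), …, σ(i)}` carry weight, and their weights
`x_{σ(i)} - x_{σ(i+1)}` are affine in `x`; at a vertex `1_T` only `T` carries weight; and crossing
the face `x_i = 0` to `x_i = 1` moves the weight of `S` to `insert i S`, where
`g (insert i S) = ε̃_i * g S`. The weight of `{a | x_a = 1}` is positive on the whole cube.
-/

section LovaszExtension

variable {ι : Type*}

def minOrOne (S : Finset ι) (x : ι → ℝ) : ℝ :=
  (insert 1 (S.image x)).min' (Finset.insert_nonempty _ _)

def maxOrZero (S : Finset ι) (x : ι → ℝ) : ℝ :=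
  (insert 0 (S.image x)).max' (Finset.insert_nonempty _ _)

section MinMax

variable {S : Finset ι} {x : ι → ℝ}

@[simp] lemma minOrOne_empty (x : ι → ℝ) : minOrOne ∅ x = 1 := by
  simp [minOrOne]

@[simp] lemma maxOrZero_empty (x : ι → ℝ) : maxOrZero ∅ x = 0 := by
  simp [maxOrZero]

lemma minOrOne_le_one : minOrOne S x ≤ 1 :=
  Finset.min'_le _ _ (Finset.mem_insert_self _ _)

lemma minOrOne_le {a : ι} (ha : a ∈ S) : minOrOne S x ≤ x a :=
  Finset.min'_le _ _ (Finset.mem_insert_of_mem (Finset.mem_image_of_mem x ha))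

lemma le_minOrOne {c : ℝ} (h1 : c ≤ 1) (h : ∀ a ∈ S, c ≤ x a) : c ≤ minOrOne S x := by
  refine Finset.le_min' _ _ _ fun y hy => ?_
  simp only [Finset.mem_insert, Finset.mem_image] at hy
  obtain rfl | ⟨a, ha, rfl⟩ := hy
  exacts [h1, h a ha]

lemma zero_le_maxOrZero : 0 ≤ maxOrZero S x :=
  Finset.le_max' _ _ (Finset.mem_insert_self _ _)

lemma le_maxOrZero {b : ι} (hb : b ∈ S) : x b ≤ maxOrZero S x :=
  Finset.le_max' _ _ (Finset.mem_insert_of_mem (Finset.mem_image_of_mem x hb))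

lemma maxOrZero_le {c : ℝ} (h0 : 0 ≤ c) (h : ∀ b ∈ S, x b ≤ c) : maxOrZero S x ≤ c := by
  refine Finset.max'_le _ _ _ fun y hy => ?_
  simp only [Finset.mem_insert, Finset.mem_image] at hy
  obtain rfl | ⟨b, hb, rfl⟩ := hy
  exacts [h0, h b hb]

lemma maxOrZero_lt {c : ℝ} (h0 : 0 < c) (h : ∀ b ∈ S, x b < c) : maxOrZero S x < c := by
  refine (Finset.max'_lt_iff _ _).2 fun y hy => ?_
  simp only [Finset.mem_insert, Finset.mem_image] at hy
  obtain rfl | ⟨b, hb, rfl⟩ := hy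
  exacts [h0, h b hb]

lemma minOrOne_congr {y : ι → ℝ} (h : ∀ a ∈ S, x a = y a) : minOrOne S x = minOrOne S y := by
  simp only [minOrOne, Finset.image_congr h]

lemma maxOrZero_congr {y : ι → ℝ} (h : ∀ b ∈ S, x b = y b) : maxOrZero S x = maxOrZero S y := by
  simp only [maxOrZero, Finset.image_congr h]

variable [DecidableEq ι]

lemma minOrOne_insert (a : ι) (S : Finset ι) (x : ι → ℝ) :
    minOrOne (insert a S) x = min (x a) (minOrOne S x) := by
  simp only [minOrOne, Finset.image_insert, Finset.insert_comm (1 : ℝ)]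
  exact Finset.min'_insert (x a) _ _

lemma maxOrZero_insert (a : ι) (S : Finset ι) (x : ι → ℝ) :
    maxOrZero (insert a S) x = max (x a) (maxOrZero S x) := by
  simp only [maxOrZero, Finset.image_insert, Finset.insert_comm (0 : ℝ)]
  exact Finset.max'_insert (x a) _ _

lemma continuous_minOrOne (S : Finset ι) : Continuous (minOrOne S) := by
  induction S using Finset.induction_on with
  | empty => exact continuous_const.congr fun x => (minOrOne_empty x).symm
  | insert a S _ ih =>
    exact ((continuous_apply a).min ih).congr fun x => (minOrOne_insert a S x).symm

lemma continuous_maxOrZero (S : Finset ι) : Continuous (maxOrZero S) := by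
  induction S using Finset.induction_on with
  | empty => exact continuous_const.congr fun x => (maxOrZero_empty x).symm
  | insert a S _ ih =>
    exact ((continuous_apply a).max ih).congr fun x => (maxOrZero_insert a S x).symm

end MinMax

variable [Fintype ι] [DecidableEq ι]

def kuhnWeight (S : Finset ι) (x : ι → ℝ) : ℝ :=
  max 0 (minOrOne S x - maxOrZero Sᶜ x)

def lovaszExtension {M : Type*} [AddCommMonoid M] [Module ℝ M] (g : Finset ι → M) (x : ι → ℝ) : M :=
  ∑ S, kuhnWeight S x • g S

section KuhnWeight

variable {S : Finset ι} {x : ι → ℝ}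

lemma kuhnWeight_nonneg : 0 ≤ kuhnWeight S x := le_max_left _ _

lemma kuhnWeight_eq_zero (h : minOrOne S x ≤ maxOrZero Sᶜ x) : kuhnWeight S x = 0 :=
  max_eq_left (sub_nonpos.2 h)

lemma kuhnWeight_eq_sub (h : maxOrZero Sᶜ x ≤ minOrOne S x) :
    kuhnWeight S x = minOrOne S x - maxOrZero Sᶜ x :=
  max_eq_right (sub_nonneg.2 h)

lemma kuhnWeight_eq_zero_of_le {a b : ι} (ha : a ∈ S) (hb : b ∉ S) (hab : x a ≤ x b) :
    kuhnWeight S x = 0 :=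
  kuhnWeight_eq_zero <| (minOrOne_le ha).trans <| hab.trans <| le_maxOrZero (Finset.mem_compl.2 hb)

lemma kuhnWeight_eq_sub_of_forall_le (hx : x ∈ Set.Icc 0 1) (h : ∀ a ∈ S, ∀ b ∉ S, x b ≤ x a) :
    kuhnWeight S x = minOrOne S x - maxOrZero Sᶜ x := by
  refine kuhnWeight_eq_sub (maxOrZero_le (le_minOrOne zero_le_one fun a _ => hx.1 a) fun b hb => ?_)
  exact le_minOrOne (hx.2 b) fun a ha => h a ha b (Finset.mem_compl.1 hb)

lemma continuous_kuhnWeight (S : Finset ι) : Continuous (kuhnWeight S) :=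
  continuous_const.max ((continuous_minOrOne S).sub (continuous_maxOrZero Sᶜ))

end KuhnWeight

variable {M : Type*} [AddCommMonoid M] [Module ℝ M]

lemma continuous_lovaszExtension [TopologicalSpace M] [ContinuousAdd M] [ContinuousSMul ℝ M]
    (g : Finset ι → M) : Continuous (lovaszExtension g) :=
  continuous_finsetSum _ fun S _ => (continuous_kuhnWeight S).smul continuous_const

lemma lovaszExtension_apply {κ : Type*} (g : Finset ι → κ → ℝ) (x : ι → ℝ) (l : κ) :
    lovaszExtension g x l = lovaszExtension (fun S => g S l) x := by
  simp [lovaszExtension, Finset.sum_apply]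

lemma lovaszExtension_eq_of_zero_or_one (g : Finset ι → M) {b : ι → ℝ}
    (hb : ∀ i, b i = 0 ∨ b i = 1) : lovaszExtension g b = g {i | b i = 1} := by
  set T : Finset ι := {i | b i = 1}
  have hT : ∀ {i}, i ∉ T → b i = 0 := fun {i} hi =>
    (hb i).resolve_right (by simpa [T] using hi)
  have hweight : kuhnWeight T b = 1 := by
    have hmin : minOrOne T b = 1 :=
      le_antisymm minOrOne_le_one (le_minOrOne le_rfl fun a ha => by simp_all [T])
    have hmax : maxOrZero Tᶜ b = 0 :=
      le_antisymm (maxOrZero_le le_rfl fun a ha => (hT (Finset.mem_compl.1 ha)).le)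
        zero_le_maxOrZero
    rw [kuhnWeight_eq_sub (by rw [hmin, hmax]; exact zero_le_one), hmin, hmax, sub_zero]
  rw [lovaszExtension, Finset.sum_eq_single_of_mem T (Finset.mem_univ _), hweight, one_smul]
  intro S _ hST
  rw [kuhnWeight_eq_zero, zero_smul]
  by_cases hsub : S ⊆ T
  · obtain ⟨a, haT, haS⟩ := Finset.exists_of_ssubset (Finset.ssubset_iff_subset_ne.2 ⟨hsub, hST⟩)
    calc minOrOne S b ≤ 1 := minOrOne_le_one
      _ = b a := by simpa [T, eq_comm] using haT
      _ ≤ maxOrZero Sᶜ b := le_maxOrZero (Finset.mem_compl.2 haS)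
  · obtain ⟨a, haS, haT⟩ := Finset.not_subset.1 hsub
    calc minOrOne S b ≤ b a := minOrOne_le haS
      _ = 0 := hT haT
      _ ≤ maxOrZero Sᶜ b := zero_le_maxOrZero

lemma lovaszExtension_pos {g : Finset ι → ℝ} (hg : ∀ S, 0 < g S) {x : ι → ℝ}
    (hx : x ∈ Set.Icc 0 1) : 0 < lovaszExtension g x := by
  set T : Finset ι := {i | x i = 1}
  have hmin : minOrOne T x = 1 :=
    le_antisymm minOrOne_le_one (le_minOrOne le_rfl fun a ha => by simp_all [T])
  have hmax : maxOrZero Tᶜ x < 1 :=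
    maxOrZero_lt one_pos fun b hb => (hx.2 b).lt_of_ne (by simpa [T] using hb)
  have hT : 0 < kuhnWeight T x := lt_max_of_lt_right (by linarith)
  exact Finset.sum_pos' (fun S _ => mul_nonneg kuhnWeight_nonneg (hg S).le)
    ⟨T, Finset.mem_univ _, mul_pos hT (hg T)⟩

lemma kuhnWeight_insert_add_single {S : Finset ι} {i : ι} (hiS : i ∉ S) {x : ι → ℝ}
    (hxi : x i = 0) : kuhnWeight (insert i S) (x + Pi.single i 1) = kuhnWeight S x := by
  set y := x + Pi.single i 1
  have hyi : y i = 1 := by simp [y, hxi]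
  have hyx : ∀ j ≠ i, x j = y j := fun j hj => by simp [y, hj]
  have hmin : minOrOne (insert i S) y = minOrOne S x := by
    rw [minOrOne_insert, hyi, min_eq_right minOrOne_le_one]
    exact (minOrOne_congr fun j hj => hyx j (ne_of_mem_of_not_mem hj hiS)).symm
  have hmax : maxOrZero (insert i S)ᶜ y = maxOrZero Sᶜ x := by
    rw [← Finset.insert_erase (Finset.mem_compl.2 hiS), ← Finset.compl_insert, maxOrZero_insert,
      hxi, max_eq_right zero_le_maxOrZero]
    exact (maxOrZero_congr fun j hj => hyx j (by simp_all)).symm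
  rw [kuhnWeight, kuhnWeight, hmin, hmax]

lemma lovaszExtension_add_single {A : Type*} [Semiring A] [Algebra ℝ A] {g : Finset ι → A}
    {c : A} {i : ι} (hg : ∀ S, i ∉ S → g (insert i S) = c * g S) {x : ι → ℝ} (hxi : x i = 0) :
    lovaszExtension g (x + Pi.single i 1) = c * lovaszExtension g x := by
  set E := Finset.univ.erase i
  have hiE : ∀ S ∈ E.powerset, i ∉ S := fun S hS h => by simpa [E] using Finset.mem_powerset.1 hS h
  have hsplit : ∀ z : ι → ℝ, lovaszExtension g z = ∑ S ∈ E.powerset, kuhnWeight S z • g S +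
      ∑ S ∈ E.powerset, kuhnWeight (insert i S) z • g (insert i S) := fun z => by
    rw [lovaszExtension, ← Finset.powerset_univ, ← Finset.insert_erase (Finset.mem_univ i),
      Finset.sum_powerset_insert (Finset.notMem_erase i _)]
  have hy_zero : ∀ S ∈ E.powerset, kuhnWeight S (x + Pi.single i 1) • g S = 0 := fun S hS => by
    refine smul_eq_zero_of_left (kuhnWeight_eq_zero (minOrOne_le_one.trans ?_)) _
    have := le_maxOrZero (x := x + Pi.single i 1) (Finset.mem_compl.2 (hiE S hS))
    rwa [Pi.add_apply, hxi, Pi.single_eq_same, zero_add] at this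
  have hx_zero : ∀ S ∈ E.powerset, kuhnWeight (insert i S) x • g (insert i S) = 0 := fun S _ =>
    smul_eq_zero_of_left (kuhnWeight_eq_zero ((minOrOne_le (Finset.mem_insert_self i S)).trans
      (hxi ▸ zero_le_maxOrZero))) _
  rw [hsplit, hsplit, Finset.sum_eq_zero hy_zero, Finset.sum_eq_zero hx_zero, zero_add, add_zero,
    Finset.mul_sum]
  refine Finset.sum_congr rfl fun S hS => ?_
  rw [kuhnWeight_insert_add_single (hiE S hS) hxi, hg S (hiE S hS), mul_smul_comm]

end LovaszExtension

section Prefix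

variable {m : ℕ} (σ : Equiv.Perm (Fin m))

def prefixSet (k : Fin (m + 1)) : Finset (Fin m) := {l | (σ.symm l : ℕ) < k}

variable {σ}

@[simp] lemma mem_prefixSet {k : Fin (m + 1)} {l : Fin m} :
    l ∈ prefixSet σ k ↔ (σ.symm l : ℕ) < k := by
  simp [prefixSet]

lemma card_prefixSet (k : Fin (m + 1)) : (prefixSet σ k).card = k := by
  have : prefixSet σ k = ({j | (j : ℕ) < k} : Finset (Fin m)).map σ.toEmbedding := by
    ext l
    simp
  rw [this, Finset.card_map, Fin.card_filter_val_lt]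
  omega

lemma cube_eq_Icc (m : ℕ) : cube m = Set.Icc 0 1 := by
  ext x
  simp [cube, Pi.le_def, forall_and]

lemma vtx_eq_zero_or_one (k : Fin (m + 1)) (l : Fin m) : vtx σ k l = 0 ∨ vtx σ k l = 1 := by
  unfold vtx
  split_ifs <;> simp

lemma vtx_mem_Dsimp (k : Fin (m + 1)) : vtx σ k ∈ Dsimp σ := by
  refine ⟨fun l => ?_, fun j j' hjj' => ?_⟩
  · rcases vtx_eq_zero_or_one (σ := σ) k l with h | h <;> simp [h]
  · have := Fin.le_def.1 hjj'
    simp only [vtx, Equiv.symm_apply_apply]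
    split_ifs <;> first | omega | norm_num

lemma filter_vtx_eq_one (k : Fin (m + 1)) :
    ({l | vtx σ k l = 1} : Finset (Fin m)) = prefixSet σ k := by
  ext l
  simp [vtx]

variable {x : Fin m → ℝ}

lemma apply_le_of_mem_prefixSet (hx : x ∈ Dsimp σ) {k : Fin (m + 1)} {a b : Fin m}
    (ha : a ∈ prefixSet σ k) (hb : b ∉ prefixSet σ k) : x b ≤ x a := by
  have := hx.2 (σ.symm a) (σ.symm b) (by rw [mem_prefixSet] at ha hb; exact Fin.le_def.2 (by omega))
  simpa using this

lemma minOrOne_prefixSet_zero : minOrOne (prefixSet σ 0) x = 1 := by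
  convert minOrOne_empty x
  ext l
  simp

lemma maxOrZero_compl_prefixSet_last : maxOrZero (prefixSet σ (Fin.last m))ᶜ x = 0 := by
  convert maxOrZero_empty x
  ext l
  simp

lemma minOrOne_prefixSet_succ (hx : x ∈ Dsimp σ) (j : Fin m) :
    minOrOne (prefixSet σ j.succ) x = x (σ j) := by
  have hj : σ j ∈ prefixSet σ j.succ := by simp
  refine le_antisymm (minOrOne_le hj) (le_minOrOne ((hx.1 _).2) fun a ha => ?_)
  simpa using hx.2 (σ.symm a) j (Fin.le_def.2 (by simp at ha; omega))

lemma maxOrZero_compl_prefixSet_castSucc (hx : x ∈ Dsimp σ) (j : Fin m) :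
    maxOrZero (prefixSet σ j.castSucc)ᶜ x = x (σ j) := by
  have hj : σ j ∈ (prefixSet σ j.castSucc)ᶜ := by simp
  refine le_antisymm (maxOrZero_le ((hx.1 _).1) fun b hb => ?_) (le_maxOrZero hj)
  simpa using hx.2 j (σ.symm b) (Fin.le_def.2 (by simp at hb; omega))

lemma kuhnWeight_prefixSet (hx : x ∈ Dsimp σ) (k : Fin (m + 1)) :
    kuhnWeight (prefixSet σ k) x = minOrOne (prefixSet σ k) x - maxOrZero (prefixSet σ k)ᶜ x :=
  kuhnWeight_eq_sub_of_forall_le (cube_eq_Icc m ▸ hx.1) fun _ ha _ hb =>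
    apply_le_of_mem_prefixSet hx ha hb

end Prefix

section Affine

variable {m : ℕ} {σ : Equiv.Perm (Fin m)} {M : Type*} [AddCommGroup M] [Module ℝ M]

lemma lovaszExtension_eq_sum_prefixSet (g : Finset (Fin m) → M) {x : Fin m → ℝ} (hx : x ∈ Dsimp σ) :
    lovaszExtension g x = ∑ k, kuhnWeight (prefixSet σ k) x • g (prefixSet σ k) := by
  rw [lovaszExtension, ← Finset.sum_subset (Finset.subset_univ (Finset.univ.image (prefixSet σ))),
    Finset.sum_image fun k _ k' _ h =>
      Fin.ext (by simpa [card_prefixSet] using congrArg Finset.card h)]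
  intro S _ hS
  -- `S` and the prefix set of the same size each contain an element missing from the other,
  -- and on `D_σ` these two elements force the weight of `S` to vanish
  set k : Fin (m + 1) := ⟨S.card, Nat.lt_succ_of_le (by simpa using S.card_le_univ)⟩
  have hne : S ≠ prefixSet σ k := fun h => hS (Finset.mem_image.2 ⟨k, Finset.mem_univ _, h.symm⟩)
  have hcard : S.card = (prefixSet σ k).card := by rw [card_prefixSet]
  obtain ⟨a, haS, haP⟩ :=
    Finset.not_subset.1 fun h => hne (Finset.eq_of_subset_of_card_le h hcard.ge)
  obtain ⟨b, hbP, hbS⟩ :=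
    Finset.not_subset.1 fun h => hne (Finset.eq_of_subset_of_card_le h hcard.le).symm
  rw [kuhnWeight_eq_zero_of_le haS hbS (apply_le_of_mem_prefixSet hx hbP haP), zero_smul]

lemma lovaszExtension_eq_of_mem_Dsimp (g : Finset (Fin m) → M) {x : Fin m → ℝ} (hx : x ∈ Dsimp σ) :
    lovaszExtension g x = g (prefixSet σ 0) +
      ∑ j, x (σ j) • (g (prefixSet σ j.succ) - g (prefixSet σ j.castSucc)) := by
  simp only [lovaszExtension_eq_sum_prefixSet g hx, kuhnWeight_prefixSet hx, sub_smul,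
    Finset.sum_sub_distrib, smul_sub]
  rw [Fin.sum_univ_succ,
    Fin.sum_univ_castSucc (f := fun k => maxOrZero (prefixSet σ k)ᶜ x • g (prefixSet σ k))]
  simp only [minOrOne_prefixSet_zero, maxOrZero_compl_prefixSet_last, minOrOne_prefixSet_succ hx,
    maxOrZero_compl_prefixSet_castSucc hx, one_smul, zero_smul, add_zero]
  abel

lemma exists_affineMap_eqOn_Dsimp (g : Finset (Fin m) → M) (σ : Equiv.Perm (Fin m)) :
    ∃ A : (Fin m → ℝ) →ᵃ[ℝ] M, Set.EqOn (lovaszExtension g) A (Dsimp σ) := by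
  refine ⟨AffineMap.const ℝ _ (g (prefixSet σ 0)) + (∑ j, (LinearMap.proj (σ j)).smulRight
    (g (prefixSet σ j.succ) - g (prefixSet σ j.castSucc))).toAffineMap, fun x hx => ?_⟩
  simp [lovaszExtension_eq_of_mem_Dsimp g hx]

end Affine

lemma ell_prod {ι : Type*} (s : Finset ι) (v : ι → Fin (n + 1) → ℝ) :
    ell (∏ i ∈ s, v i) = ∏ i ∈ s, ell (v i) := by
  ext j
  simp [ell, Finset.prod_apply, Finset.prod_div_distrib]

lemma phi_eq_prod_prefixSet {F : Type*} [Field F] (τ : Fin (n + 1) → (F →+* ℝ))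
    (ε : Fin n → (𝓞 F)ˣ) (σ : Equiv.Perm (Fin n)) (k : Fin (n + 1)) :
    phi τ ε σ k = ∏ l ∈ prefixSet σ k, ell (emb τ ((ε l : 𝓞 F) : F)) := by
  have hf : fvec τ ε σ k =
      ∏ j ∈ ({j | (j : ℕ) < k} : Finset (Fin n)), emb τ ((ε (σ j) : 𝓞 F) : F) := by
    ext l
    simp [fvec, emb, Finset.prod_apply]
  rw [phi, hf, ell_prod]
  exact Finset.prod_equiv σ (by simp) (by simp)

theorem exists_piecewise_affine_map_general
    {K : Type*} [Field K] [NumberField K] {n : ℕ}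
    (τ : Fin (n + 1) → (K →+* ℝ))
    (ε : Fin n → (𝓞 K)ˣ) (hpos : ∀ i, ε i ∈ Eplus τ) :
    ∃ f : (Fin n → ℝ) → (Fin n → ℝ),
      ContinuousOn f (cube n) ∧
      (∀ x ∈ cube n, ∀ l, 0 < f x l) ∧
      (∀ σ : Equiv.Perm (Fin n), ∃ A : (Fin n → ℝ) →ᵃ[ℝ] (Fin n → ℝ),
        (∀ i : Fin (n + 1), A (vtx σ i) = phi τ ε σ i) ∧ ∀ x ∈ Dsimp σ, f x = A x) ∧
      (∀ (x : Fin n → ℝ) (i : Fin n), x ∈ cube n → x + Pi.single i 1 ∈ cube n →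
        f (x + Pi.single i 1) = ell (emb τ ((ε i : 𝓞 K) : K)) * f x) ∧
      (∀ b : Fin n → ℝ, (∀ i, b i = 0 ∨ b i = 1) → ∀ l,
        f b l = ∏ i, (if b i = 1 then ell (emb τ ((ε i : 𝓞 K) : K)) l else 1)) := by
  set g : Finset (Fin n) → Fin n → ℝ := fun S => ∏ i ∈ S, ell (emb τ ((ε i : 𝓞 K) : K))
  refine ⟨lovaszExtension g, (continuous_lovaszExtension g).continuousOn, fun x hx l => ?_,
    fun σ => ?_, fun x i hx hxi => ?_, fun b hb l => ?_⟩
  · rw [lovaszExtension_apply]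
    refine lovaszExtension_pos (fun S => ?_) (cube_eq_Icc n ▸ hx)
    simp only [g, Finset.prod_apply]
    exact Finset.prod_pos fun i _ => div_pos (hpos i _) (hpos i _)
  · obtain ⟨A, hA⟩ := exists_affineMap_eqOn_Dsimp g σ
    refine ⟨A, fun k => ?_, hA⟩
    rw [← hA (vtx_mem_Dsimp k), lovaszExtension_eq_of_zero_or_one g (vtx_eq_zero_or_one k),
      filter_vtx_eq_one, phi_eq_prod_prefixSet]
  · refine lovaszExtension_add_single (fun S hS => Finset.prod_insert hS) ?_
    have := (hxi i).2
    simp only [Pi.add_apply, Pi.single_eq_same] at this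
    linarith [(hx i).1]
  · rw [lovaszExtension_eq_of_zero_or_one g hb]
    simp only [g]
    rw [Finset.prod_apply, Finset.prod_filter]

/-- **Proposition 10.** The Colmez piecewise affine map: a continuous map on the unit cube,
affine on each simplex `D_σ` with vertex values `φ_{i,σ}`, compatible with the unit action
across opposite faces, and multiplicative on vertices. -/
theorem exists_piecewise_affine_map
    {K : Type*} [Field K] [NumberField K] {n : ℕ} (hn : 1 ≤ n)
    (τ : Fin (n + 1) → (K →+* ℝ)) (hτ : Function.Injective τ)
    (hdeg : Module.finrank ℚ K = n + 1)
    (ε : Fin n → (𝓞 K)ˣ) (hpos : ∀ i, ε i ∈ Eplus τ) :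
    ∃ f : (Fin n → ℝ) → (Fin n → ℝ),
      ContinuousOn f (cube n) ∧
      (∀ x ∈ cube n, ∀ l, 0 < f x l) ∧
      (∀ σ : Equiv.Perm (Fin n), ∃ A : (Fin n → ℝ) →ᵃ[ℝ] (Fin n → ℝ),
        (∀ i : Fin (n + 1), A (vtx σ i) = phi τ ε σ i) ∧ ∀ x ∈ Dsimp σ, f x = A x) ∧
      (∀ (x : Fin n → ℝ) (i : Fin n), x ∈ cube n → x + Pi.single i 1 ∈ cube n →
        f (x + Pi.single i 1) = ell (emb τ ((ε i : 𝓞 K) : K)) * f x) ∧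
      (∀ b : Fin n → ℝ, (∀ i, b i = 0 ∨ b i = 1) → ∀ l,
        f b l = ∏ i, (if b i = 1 then ell (emb τ ((ε i : 𝓞 K) : K)) l else 1)) :=
  exists_piecewise_affine_map_general τ ε hpos

end SignedDomain
end
end

section
/- Let W be a real vector space of dimension r, let w_0, w_1,…,w_r ∈ W be affinely independent (an affine basis of W), let P be the simplex of all convex combinations of w_0,…,w_r, and for w ∈ W let b_i(w) denote the unique barycentric coordinates: w = ∑_{i=0}^r b_i(w) w_i with ∑_{i=0}^r b_i(w) = 1. Let x ∈ W and y ∈ P. Then the segment from x to y pierces P if and only if b_i(x) > 0 whenever b_i(y) = 0 (0 ≤ i ≤ r). Moreover, if z lies in the interior of P, then so do all points of the closed segment joining z and y, except possibly y itself. -/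
/-!
In barycentric coordinates the point `lineMap x y t` of the segment has coordinates
`(1 - t) * b_i(x) + t * b_i(y)`, and the interior of the simplex is where all coordinates are
positive. If some point of the segment is interior and `b_i(y) = 0`, that coordinate is
`(1 - t) * b_i(x) > 0`, forcing `b_i(x) > 0`. Conversely, as `t → 1⁻` the coordinates with
`b_i(y) > 0` stay positive by continuity and those with `b_i(y) = 0` equal `(1 - t) * b_i(x) > 0`.
The second claim holds for any convex set: the open segment from an interior point to a point
of the set lies in the interior.
-/

noncomputable section

/-- `Pierces x y P`: the closed segment from `x` to `y` pierces `P`, i.e. `y ∈ P` and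
the segment contains an interior point of `P`. -/
def Pierces {W : Type*} [AddCommGroup W] [Module ℝ W] [TopologicalSpace W]
    (x y : W) (P : Set W) : Prop :=
  y ∈ P ∧ ∃ p ∈ segment ℝ x y, p ∈ interior P

section

open Set Filter Topology

theorem Convex.mem_interior_of_mem_segment_of_ne {𝕜 E : Type*} [Field 𝕜] [LinearOrder 𝕜]
    [IsStrictOrderedRing 𝕜] [AddCommGroup E] [Module 𝕜 E] [TopologicalSpace E]
    [IsTopologicalAddGroup E] [ContinuousConstSMul 𝕜 E] {s : Set E} (hs : Convex 𝕜 s)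
    {z y p : E} (hz : z ∈ interior s) (hy : y ∈ s) (hp : p ∈ segment 𝕜 z y) (hpy : p ≠ y) :
    p ∈ interior s := by
  rcases eq_or_ne z p with rfl | hzp
  · exact hz
  · exact hs.openSegment_interior_self_subset_interior hz hy
      (mem_openSegment_of_ne_left_right hzp hpy.symm hp)

theorem exists_mem_Icc_forall_pos_combo {ι : Type*} [Finite ι] {a b : ι → ℝ}
    (hb : ∀ i, 0 ≤ b i) (hab : ∀ i, b i = 0 → 0 < a i) :
    ∃ t ∈ Icc (0 : ℝ) 1, ∀ i, 0 < (1 - t) * a i + t * b i := by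
  have hpos : ∀ i, ∀ᶠ t in 𝓝[<] (1 : ℝ), 0 < (1 - t) * a i + t * b i := by
    intro i
    rcases (hb i).eq_or_lt with hbi | hbi
    · filter_upwards [self_mem_nhdsWithin] with t ht
      rw [← hbi, mul_zero, add_zero]
      exact mul_pos (sub_pos.2 ht) (hab i hbi.symm)
    · have hcont : Continuous fun t : ℝ => (1 - t) * a i + t * b i := by fun_prop
      have hlim := hcont.tendsto 1
      simp only [sub_self, zero_mul, one_mul, zero_add] at hlim
      exact (hlim.eventually (lt_mem_nhds hbi)).filter_mono nhdsWithin_le_nhds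
  have hIoo : ∀ᶠ t in 𝓝[<] (1 : ℝ), t ∈ Ioo 0 1 := Ioo_mem_nhdsLT zero_lt_one
  obtain ⟨t, ht, hti⟩ := (hIoo.and (eventually_all.2 hpos)).exists
  exact ⟨t, Ioo_subset_Icc_self ht, hti⟩

namespace AffineBasis

variable {ι : Type*}

theorem coord_lineMap {V P : Type*} [AddCommGroup V] [Module ℝ V] [AddTorsor V P]
    (B : AffineBasis ι ℝ P) (i : ι) (a b : P) (t : ℝ) :
    B.coord i (AffineMap.lineMap a b t) = (1 - t) * B.coord i a + t * B.coord i b := by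
  rw [AffineMap.apply_lineMap, AffineMap.lineMap_apply_ring]

variable [Finite ι] {E : Type*} [NormedAddCommGroup E] [NormedSpace ℝ E] (B : AffineBasis ι ℝ E)

theorem lineMap_mem_interior_convexHull_iff (x y : E) (t : ℝ) :
    AffineMap.lineMap x y t ∈ interior (convexHull ℝ (range B)) ↔
      ∀ i, 0 < (1 - t) * B.coord i x + t * B.coord i y := by
  simp only [B.interior_convexHull, mem_ofPred_eq, coord_lineMap]

theorem pierces_convexHull_iff {x y : E} (hy : y ∈ convexHull ℝ (range B)) :
    Pierces x y (convexHull ℝ (range B)) ↔ ∀ i, B.coord i y = 0 → 0 < B.coord i x := by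
  have hy_coord : ∀ i, 0 ≤ B.coord i y := by rwa [B.convexHull_eq_nonneg_coord] at hy
  simp only [Pierces, hy, true_and, segment_eq_image_lineMap, exists_mem_image,
    lineMap_mem_interior_convexHull_iff]
  constructor
  · rintro ⟨t, ht, hpos⟩ i hyi
    have hxi := hpos i
    rw [hyi, mul_zero, add_zero] at hxi
    exact pos_of_mul_pos_right hxi (sub_nonneg.2 ht.2)
  · exact exists_mem_Icc_forall_pos_combo hy_coord

end AffineBasis

end

theorem pierces_simplex_iff_barycentric_general
    {W : Type*} [NormedAddCommGroup W] [NormedSpace ℝ W]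
    {r : ℕ}
    (B : AffineBasis (Fin (r + 1)) ℝ W)
    (x y : W) (hy : y ∈ convexHull ℝ (Set.range fun i => B i)) :
    (Pierces x y (convexHull ℝ (Set.range fun i => B i)) ↔
      ∀ i, B.coord i y = 0 → 0 < B.coord i x) ∧
    (∀ z ∈ interior (convexHull ℝ (Set.range fun i => B i)),
      ∀ p ∈ segment ℝ z y, p ≠ y → p ∈ interior (convexHull ℝ (Set.range fun i => B i))) :=
  ⟨B.pierces_convexHull_iff hy, fun _ hz _ hp hpy =>
    (convex_convexHull ℝ _).mem_interior_of_mem_segment_of_ne hz hy hp hpy⟩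

/-- **Lemma 12.** In an `r`-dimensional real vector space with affine basis `w_0,…,w_r`,
the segment from `x` to a point `y` of the simplex `P = conv{w_0,…,w_r}` pierces `P` iff
every vanishing barycentric coordinate of `y` is positive at `x`; moreover the segment
from an interior point `z` to `y` stays in the interior except possibly at `y`. -/
theorem pierces_simplex_iff_barycentric
    {W : Type*} [NormedAddCommGroup W] [NormedSpace ℝ W] [FiniteDimensional ℝ W]
    {r : ℕ} (hr : Module.finrank ℝ W = r)
    (B : AffineBasis (Fin (r + 1)) ℝ W)
    (x y : W) (hy : y ∈ convexHull ℝ (Set.range fun i => B i)) :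
    (Pierces x y (convexHull ℝ (Set.range fun i => B i)) ↔
      ∀ i, B.coord i y = 0 → 0 < B.coord i x) ∧
    (∀ z ∈ interior (convexHull ℝ (Set.range fun i => B i)),
      ∀ p ∈ segment ℝ z y, p ≠ y → p ∈ interior (convexHull ℝ (Set.range fun i => B i))) :=
  pierces_simplex_iff_barycentric_general B x y hy
end
end

section
/- Let v_1,…,v_r be a basis of an r-dimensional real vector space W, let C := ∑_{j=1}^r ℝ_{≥0}·v_j be the cone they generate, let y = ∑_{j=1}^r y_j v_j ∈ C (i.e., all y_j ≥ 0) and let x = ∑_{j=1}^r x_j v_j ∈ W. Then the segment from x to y pierces C if and only if x_j > 0 whenever y_j = 0 (1 ≤ j ≤ r). -/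
noncomputable section

/-!
In the coordinates of the basis, the cone is the closed positive orthant, whose interior is the
open orthant, and piercing is invariant under continuous linear equivalences. A point
`(1 - t) • x + t • y` of the segment lies in the open orthant for every `t < 1` close enough to
`1` as soon as `x j > 0` at the coordinates where `y j = 0`; conversely, at such a coordinate
every point of the segment has coordinate `(1 - t) * x j`.
-/

open Set Filter Topology

theorem Pierces.preimage_continuousLinearEquiv_iff {W V : Type*} [AddCommGroup W] [Module ℝ W]
    [TopologicalSpace W] [AddCommGroup V] [Module ℝ V] [TopologicalSpace V]
    (e : W ≃L[ℝ] V) (x y : W) (P : Set V) :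
    Pierces x y (e ⁻¹' P) ↔ Pierces (e x) (e y) P := by
  have hint : interior (e ⁻¹' P) = e ⁻¹' interior P := (e.toHomeomorph.preimage_interior P).symm
  have hseg : e '' segment ℝ x y = segment ℝ (e x) (e y) :=
    image_segment ℝ (e : W →ₗ[ℝ] V).toAffineMap x y
  simp only [Pierces, hint, ← hseg, exists_mem_image, mem_preimage]

theorem exists_mem_segment_forall_pos_iff {ι : Type*} [Finite ι] (x y : ι → ℝ)
    (hy : ∀ j, 0 ≤ y j) :
    (∃ p ∈ segment ℝ x y, ∀ j, 0 < p j) ↔ ∀ j, y j = 0 → 0 < x j := by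
  constructor
  · rintro ⟨_, ⟨a, b, ha, -, -, rfl⟩, hp⟩ j hj
    have hpj := hp j
    simp only [Pi.add_apply, Pi.smul_apply, smul_eq_mul, hj, mul_zero, add_zero] at hpj
    exact pos_of_mul_pos_right hpj ha
  · intro hx
    -- points of the segment close enough to `y` but different from it work
    have h_near : ∀ᶠ t in 𝓝[<] (1 : ℝ), ∀ j, 0 < (1 - t) * x j + t * y j := by
      rw [eventually_all]
      intro j
      rcases (hy j).eq_or_lt with hyj | hyj
      · filter_upwards [self_mem_nhdsWithin] with t (ht : t < 1)
        rw [← hyj, mul_zero, add_zero]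
        exact mul_pos (sub_pos.2 ht) (hx j hyj.symm)
      · have hcont : ContinuousAt (fun t : ℝ => (1 - t) * x j + t * y j) 1 := by fun_prop
        refine (hcont.eventually (lt_mem_nhds ?_)).filter_mono nhdsWithin_le_nhds
        simpa using hyj
    obtain ⟨t, ⟨ht0, ht1⟩, ht⟩ :=
      (Eventually.and (Ioo_mem_nhdsLT zero_lt_one) h_near).exists
    exact ⟨(1 - t) • x + t • y, ⟨1 - t, t, by linarith, ht0.le, by ring, rfl⟩, ht⟩

theorem pierces_pi_Ici_iff {ι : Type*} [Finite ι] (x y : ι → ℝ) (hy : ∀ j, 0 ≤ y j) :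
    Pierces x y (univ.pi fun _ => Ici 0) ↔ ∀ j, y j = 0 → 0 < x j := by
  rw [Pierces, interior_pi_set finite_univ, ← exists_mem_segment_forall_pos_iff x y hy]
  simp only [mem_univ_pi, mem_Ici, mem_Ioi, interior_Ici, hy, implies_true, true_and]

namespace Module.Basis

variable {ι W : Type*} [Fintype ι] [AddCommGroup W] [Module ℝ W]

def nonnegCone (v : Basis ι ℝ W) : Set W :=
  {z | ∃ c : ι → ℝ, (∀ j, 0 ≤ c j) ∧ z = ∑ j, c j • v j}

theorem nonnegCone_eq_preimage (v : Basis ι ℝ W) :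
    v.nonnegCone = v.equivFun ⁻¹' univ.pi fun _ => Ici 0 := by
  ext z
  constructor
  · rintro ⟨c, hc, rfl⟩ j -
    rw [← v.equivFun_symm_apply, LinearEquiv.apply_symm_apply]
    exact hc j
  · intro hz
    exact ⟨v.equivFun z, fun j => hz j (mem_univ j), (v.sum_equivFun z).symm⟩

end Module.Basis

theorem pierces_cone_iff_coords_general
    {W : Type*} [NormedAddCommGroup W] [NormedSpace ℝ W]
    {r : ℕ}
    (v : Module.Basis (Fin r) ℝ W)
    (yc xc : Fin r → ℝ) (hyc : ∀ j, 0 ≤ yc j) :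
    Pierces (∑ j, xc j • v j) (∑ j, yc j • v j)
        {z : W | ∃ c : Fin r → ℝ, (∀ j, 0 ≤ c j) ∧ z = ∑ j, c j • v j} ↔
      ∀ j, yc j = 0 → 0 < xc j := by
  have hcoords (c : Fin r → ℝ) : ∑ j, c j • v j = v.equivFunL.symm c :=
    (v.equivFun_symm_apply c).symm
  change Pierces _ _ v.nonnegCone ↔ _
  rw [v.nonnegCone_eq_preimage, show ⇑v.equivFun = v.equivFunL from rfl, hcoords, hcoords,
    Pierces.preimage_continuousLinearEquiv_iff, ContinuousLinearEquiv.apply_symm_apply,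
    ContinuousLinearEquiv.apply_symm_apply]
  exact pierces_pi_Ici_iff xc yc hyc

/-- **Lemma 13.** For the cone `C = ∑ ℝ_{≥0}·v_j` generated by a basis `v_1,…,v_r` of an
`r`-dimensional real vector space, the segment from `x = ∑ x_j v_j` to `y = ∑ y_j v_j ∈ C`
pierces `C` iff `x_j > 0` whenever `y_j = 0`. -/
theorem pierces_cone_iff_coords
    {W : Type*} [NormedAddCommGroup W] [NormedSpace ℝ W] [FiniteDimensional ℝ W]
    {r : ℕ} (hr : Module.finrank ℝ W = r)
    (v : Module.Basis (Fin r) ℝ W)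
    (yc xc : Fin r → ℝ) (hyc : ∀ j, 0 ≤ yc j) :
    Pierces (∑ j, xc j • v j) (∑ j, yc j • v j)
        {z : W | ∃ c : Fin r → ℝ, (∀ j, 0 ≤ c j) ∧ z = ∑ j, c j • v j} ↔
      ∀ j, yc j = 0 → 0 < xc j :=
  pierces_cone_iff_coords_general v yc xc hyc
end
end

section
/- The origin of ℝ^{n−1} does not lie on any of the affine subspaces h_{i,σ} := {∑_{0 ≤ j ≤ n−1, j ≠ i} b_j φ_{j,σ} : b_j ∈ ℝ, ∑_{j ≠ i} b_j = 1}, for 0 ≤ i ≤ n−1 and σ ∈ S_{n−1}. -/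
open scoped Classical NumberField
open NumberField

noncomputable section

/-!
If `0 = ∑_{j ≠ i} b_j φ_{j,σ}` with `∑ b_j = 1`, then clearing the last coordinates writes `e_n` as
a linear combination of the `n` vectors `f_{j,σ} = (τ_l g_j)_l`, `j ≠ i`, with `g_j ∈ K`.
Since `[K : ℚ] = n + 1`, some `a ≠ 0` has `Tr(a g_j) = 0` for all `j ≠ i`. The trace is the sum
of the real embeddings, so `(τ_l a)_l` is orthogonal to these `f_{j,σ}`, hence to `e_n`, which
forces `τ_n a = 0`.
-/

theorem Algebra.exists_ne_zero_forall_trace_mul_eq_zero {F L ι : Type*} [Field F]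
    [CommRing L] [Algebra F L] [FiniteDimensional F L] (s : Finset ι) (g : ι → L)
    (hs : s.card < Module.finrank F L) :
    ∃ a ≠ 0, ∀ j ∈ s, Algebra.trace F L (a * g j) = 0 := by
  let traces : L →ₗ[F] (s → F) :=
    LinearMap.pi fun j => (Algebra.trace F L).comp (LinearMap.mulRight F (g j))
  have hker : LinearMap.ker traces ≠ ⊥ :=
    LinearMap.ker_ne_bot_of_finrank_lt (by simpa using hs)
  obtain ⟨a, ha, ha0⟩ := Submodule.exists_mem_ne_zero_of_ne_bot hker
  exact ⟨a, ha0, fun j hj => congrFun (LinearMap.mem_ker.mp ha) ⟨j, hj⟩⟩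

theorem NumberField.trace_eq_sum_realEmbeddings {K ι : Type*} [Field K] [NumberField K]
    [Fintype ι] (τ : ι → (K →+* ℝ)) (hτ : Function.Injective τ)
    (hcard : Fintype.card ι = Module.finrank ℚ K) (x : K) :
    (Algebra.trace ℚ K x : ℝ) = ∑ l, τ l x := by
  let toComplex : ι → (K →+* ℂ) := fun l => Complex.ofRealHom.comp (τ l)
  have hbij : Function.Bijective toComplex := by
    refine (Fintype.bijective_iff_injective_and_card _).mpr ⟨fun l l' h => hτ ?_, ?_⟩
    · ext y
      exact Complex.ofReal_injective (RingHom.congr_fun h y)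
    · rw [hcard, Embeddings.card]
  have hsum : ((Algebra.trace ℚ K x : ℚ) : ℂ) = ∑ l, ((τ l x : ℝ) : ℂ) :=
    calc ((Algebra.trace ℚ K x : ℚ) : ℂ) = ∑ σ : K →ₐ[ℚ] ℂ, σ x := by
          rw [← trace_eq_sum_embeddings, eq_ratCast]
      _ = ∑ φ : K →+* ℂ, φ x :=
          (Fintype.sum_equiv (RingHom.equivRatAlgHom K ℂ) _ _ fun _ => rfl).symm
      _ = ∑ l, ((τ l x : ℝ) : ℂ) := (Fintype.sum_bijective toComplex hbij _ _ fun _ => rfl).symm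
  exact_mod_cast hsum

namespace SignedDomain

variable {K : Type*} [Field K] {n : ℕ}

theorem emb_dotProduct_emb [NumberField K] {τ : Fin (n + 1) → (K →+* ℝ)}
    (hτ : Function.Injective τ) (hdeg : Module.finrank ℚ K = n + 1) (x y : K) :
    emb τ x ⬝ᵥ emb τ y = Algebra.trace ℚ K (x * y) := by
  rw [trace_eq_sum_realEmbeddings τ hτ (by simp [hdeg])]
  simp [dotProduct, emb]

def fElem (ε : Fin n → (𝓞 K)ˣ) (σ : Equiv.Perm (Fin n)) (i : Fin (n + 1)) : K :=
  ∏ j ∈ Finset.univ.filter (fun j : Fin n => (j : ℕ) < (i : ℕ)), ((ε (σ j) : 𝓞 K) : K)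

theorem fElem_ne_zero (ε : Fin n → (𝓞 K)ˣ) (σ : Equiv.Perm (Fin n)) (i : Fin (n + 1)) :
    fElem ε σ i ≠ 0 :=
  Finset.prod_ne_zero_iff.mpr fun j _ => by simp

theorem fvec_eq_emb_fElem (τ : Fin (n + 1) → (K →+* ℝ)) (ε : Fin n → (𝓞 K)ˣ)
    (σ : Equiv.Perm (Fin n)) (i : Fin (n + 1)) : fvec τ ε σ i = emb τ (fElem ε σ i) := by
  ext l
  simp [fvec, emb, fElem, map_prod]

theorem en_eq_sum_smul_of_sum_smul_ell_eq_zero {ι : Type*} (s : Finset ι)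
    (x : ι → Fin (n + 1) → ℝ) (b : ι → ℝ) (hx : ∀ j ∈ s, x j (Fin.last n) ≠ 0)
    (hb1 : ∑ j ∈ s, b j = 1) (hb0 : ∑ j ∈ s, b j • ell (x j) = 0) :
    en = ∑ j ∈ s, (b j / x j (Fin.last n)) • x j := by
  ext l
  simp only [en, Finset.sum_apply, Pi.smul_apply, smul_eq_mul]
  rcases Fin.eq_castSucc_or_eq_last l with ⟨l, rfl⟩ | rfl
  · rw [if_neg (Fin.castSucc_lt_last l).ne]
    have h := congrFun hb0 l
    simp only [Finset.sum_apply, Pi.smul_apply, smul_eq_mul, ell, Pi.zero_apply] at h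
    rw [← h]
    exact Finset.sum_congr rfl fun j _ => by ring
  · rw [if_pos rfl, ← hb1]
    exact Finset.sum_congr rfl fun j hj => (div_mul_cancel₀ _ (hx j hj)).symm

theorem origin_not_on_face_subspaces_general
    {K : Type*} [Field K] [NumberField K] {n : ℕ}
    (τ : Fin (n + 1) → (K →+* ℝ)) (hτ : Function.Injective τ)
    (hdeg : Module.finrank ℚ K = n + 1)
    (ε : Fin n → (𝓞 K)ˣ) :
    ∀ (σ : Equiv.Perm (Fin n)) (i : Fin (n + 1)),
      ¬ ∃ b : Fin (n + 1) → ℝ,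
        (∑ j ∈ Finset.univ.erase i, b j = 1) ∧
        (0 : Fin n → ℝ) = ∑ j ∈ Finset.univ.erase i, b j • phi τ ε σ j := by
  rintro σ i ⟨b, hb1, hb0⟩
  have hen := en_eq_sum_smul_of_sum_smul_ell_eq_zero _ (fvec τ ε σ) b
    (fun j _ => by simp [fvec_eq_emb_fElem, emb, fElem_ne_zero]) hb1 hb0.symm
  obtain ⟨a, ha0, ha⟩ := Algebra.exists_ne_zero_forall_trace_mul_eq_zero (F := ℚ)
    (Finset.univ.erase i) (fElem ε σ) (by simp [hdeg])
  refine (map_ne_zero (τ (Fin.last n))).mpr ha0 ?_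
  calc τ (Fin.last n) a = emb τ a ⬝ᵥ en := by simp [dotProduct, en, emb]
    _ = 0 := by
      rw [hen, dotProduct_sum]
      refine Finset.sum_eq_zero fun j hj => ?_
      rw [dotProduct_smul, fvec_eq_emb_fElem, emb_dotProduct_emb hτ hdeg, ha j hj]
      simp

/-- **Lemma 18.** The origin of `ℝ^n` lies on none of the affine subspaces `h_{i,σ}`
spanned affinely by the `φ_{j,σ}` with `j ≠ i`. -/
theorem origin_not_on_face_subspaces
    {K : Type*} [Field K] [NumberField K] {n : ℕ} (hn : 1 ≤ n)
    (τ : Fin (n + 1) → (K →+* ℝ)) (hτ : Function.Injective τ)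
    (hdeg : Module.finrank ℚ K = n + 1)
    (ε : Fin n → (𝓞 K)ˣ) (hpos : ∀ i, ε i ∈ Eplus τ) :
    ∀ (σ : Equiv.Perm (Fin n)) (i : Fin (n + 1)),
      ¬ ∃ b : Fin (n + 1) → ℝ,
        (∑ j ∈ Finset.univ.erase i, b j = 1) ∧
        (0 : Fin n → ℝ) = ∑ j ∈ Finset.univ.erase i, b j • phi τ ε σ j :=
  origin_not_on_face_subspaces_general τ hτ hdeg ε

end SignedDomain
end
end

section
/- det(LOG ε̃_1,…,LOG ε̃_{n−1}) = n · det(Log ε_1,…,Log ε_{n−1}). In particular, neither of these (n−1)×(n−1) determinants vanishes, both have the same sign, and Λ := ∑_{i=1}^{n−1} ℤ·LOG ε̃_i is a full lattice in ℝ^{n−1}. -/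
/-!
For a unit `u`, `∑ₗ log |τₗ u| = log |N(u)| = 0`, so `log(τₗ u / τₙ u) = log τₗ u + ∑ₖ log τₖ u`
(`k` over the first `n` embeddings): the LOG-matrix is `(1 + J) · Log`, with `J` the all-ones matrix
and `det (1 + J) = n + 1`. The Log-determinant is nonzero by Dirichlet's unit theorem: `E₊`
contains the kernel of the sign map, so `V` has finite index in `(𝓞 K)ˣ`, hence nonzero regulator,
and the regulator is `|det|` of the log-matrix with any one place left out.
-/

open scoped Classical NumberField
open NumberField

noncomputable section

namespace SignedDomain

variable {K : Type*} [Field K] [NumberField K] {n : ℕ}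

/-- The matrix with columns `LOG ε̃_i`, where `ε̃_i = ℓ(ε_i)`. -/
def LOGMat {K : Type*} [Field K] [NumberField K] {n : ℕ}
    (τ : Fin (n + 1) → (K →+* ℝ)) (ε : Fin n → (𝓞 K)ˣ) : Matrix (Fin n) (Fin n) ℝ :=
  Matrix.of fun l i => Real.log (ell (emb τ ((ε i : 𝓞 K) : K)) l)

end SignedDomain

namespace Matrix

variable {ι : Type*} [Fintype ι] [DecidableEq ι]

theorem det_add_of_colSum {R : Type*} [CommRing R] (A : Matrix ι ι R) :
    (A + of fun _ i => ∑ k, A k i).det = (Fintype.card ι + 1) * A.det := by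
  have hfactor : A + of (fun _ i => ∑ k, A k i) =
      (1 + replicateCol Unit (fun _ : ι => (1 : R)) * replicateRow Unit (fun _ : ι => (1 : R))) *
        A := by
    rw [add_mul, one_mul, Matrix.mul_assoc]
    ext l i
    simp [Matrix.mul_apply]
  rw [hfactor, det_mul, det_one_add_replicateCol_mul_replicateRow]
  simp [dotProduct, add_comm]

theorem span_range_col_eq_top {M : Matrix ι ι ℝ} (hM : M.det ≠ 0) :
    Submodule.span ℝ (Set.range M.col) = ⊤ :=
  (linearIndependent_cols_of_det_ne_zero hM).span_eq_top_of_card_eq_finrank' (by simp)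

theorem discreteTopology_span_int_range_col {M : Matrix ι ι ℝ} (hM : M.det ≠ 0) :
    DiscreteTopology (Submodule.span ℤ (Set.range M.col)) := by
  rw [← coe_basisOfLinearIndependentOfCardEqFinrank' M.col
    (linearIndependent_cols_of_det_ne_zero hM) (by simp)]
  infer_instance

end Matrix

theorem Real.sign_mul_of_pos {c : ℝ} (hc : 0 < c) (x : ℝ) : Real.sign (c * x) = Real.sign x := by
  rcases lt_trichotomy x 0 with hx | rfl | hx
  · rw [Real.sign_of_neg hx, Real.sign_of_neg (mul_neg_of_pos_of_neg hc hx)]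
  · rw [mul_zero]
  · rw [Real.sign_of_pos hx, Real.sign_of_pos (mul_pos hc hx)]

theorem Subgroup.finiteIndex_of_relIndex_ne_zero {G : Type*} [Group G] {H K : Subgroup G}
    (hHK : H.relIndex K ≠ 0) [K.FiniteIndex] : H.FiniteIndex := by
  rw [finiteIndex_iff, ← relIndex_top_right]
  refine relIndex_ne_zero_trans hHK ?_
  rw [relIndex_top_right]
  exact FiniteIndex.index_ne_zero

namespace NumberField.InfinitePlace

variable {K : Type*} [Field K]

def ofRealEmbedding (φ : K →+* ℝ) : InfinitePlace K :=
  mk (Complex.ofRealHom.comp φ)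

theorem ofRealEmbedding_apply (φ : K →+* ℝ) (x : K) : ofRealEmbedding φ x = |φ x| := by
  simp [ofRealEmbedding, apply]

theorem isReal_ofRealEmbedding (φ : K →+* ℝ) : (ofRealEmbedding φ).IsReal :=
  isReal_mk_iff.mpr (ComplexEmbedding.isReal_iff.mpr (by ext; simp))

theorem ofRealEmbedding_injective : Function.Injective (ofRealEmbedding (K := K)) := by
  intro φ ψ h
  have hreal : ComplexEmbedding.conjugate (Complex.ofRealHom.comp φ) =
      Complex.ofRealHom.comp φ := by ext; simp
  have hcomp : Complex.ofRealHom.comp φ = Complex.ofRealHom.comp ψ := by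
    rcases mk_eq_iff.mp h with h | h
    · exact h
    · rwa [hreal] at h
  ext x
  simpa using RingHom.congr_fun hcomp x

theorem card_le_finrank [NumberField K] : Fintype.card (InfinitePlace K) ≤ Module.finrank ℚ K := by
  have := card_add_two_mul_card_eq_rank K
  rw [card_eq_nrRealPlaces_add_nrComplexPlaces]
  omega

theorem bijective_ofRealEmbedding_comp [NumberField K] {ι : Type*} [Fintype ι]
    {τ : ι → (K →+* ℝ)} (hτ : Function.Injective τ) (hcard : Module.finrank ℚ K = Fintype.card ι) :
    Function.Bijective (ofRealEmbedding ∘ τ) := by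
  have hinj := ofRealEmbedding_injective.comp hτ
  refine (Fintype.bijective_iff_injective_and_card _).mpr ⟨hinj, ?_⟩
  exact le_antisymm (Fintype.card_le_of_injective _ hinj) (hcard ▸ card_le_finrank)

end NumberField.InfinitePlace

namespace NumberField.Units

open InfinitePlace

variable {K : Type*} [Field K] [NumberField K]

theorem sum_log_eq_zero_of_bijective {ι : Type*} [Fintype ι] {τ : ι → (K →+* ℝ)}
    (hτ : Function.Bijective (ofRealEmbedding ∘ τ)) (u : (𝓞 K)ˣ) :
    ∑ i, Real.log (τ i u) = 0 :=
  -- no sign condition on `τ i u` is needed, as `Real.log |x| = Real.log x`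
  calc ∑ i, Real.log (τ i u)
      = ∑ i, ((ofRealEmbedding (τ i)).mult : ℝ) * Real.log (ofRealEmbedding (τ i) u) := by
        simp [(isReal_ofRealEmbedding _).mult_eq_one, ofRealEmbedding_apply]
    _ = ∑ w : InfinitePlace K, (w.mult : ℝ) * Real.log (w u) :=
        (Equiv.ofBijective _ hτ).sum_comp fun w => (w.mult : ℝ) * Real.log (w u)
    _ = 0 := sum_mult_mul_log u

theorem rank_eq_of_bijective {n : ℕ} {τ : Fin (n + 1) → (K →+* ℝ)}
    (hτ : Function.Bijective (ofRealEmbedding ∘ τ)) : rank K = n := by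
  simp [rank, ← Fintype.card_of_bijective hτ]

end NumberField.Units

namespace SignedDomain

open NumberField.InfinitePlace NumberField.Units

variable {K : Type*} [Field K] {n : ℕ}

def signsHom (τ : Fin (n + 1) → (K →+* ℝ)) : (𝓞 K)ˣ →* (Fin (n + 1) → SignTypeˣ) :=
  MonoidHom.pi fun i => Units.map <|
    ((signHom : ℝ →*₀ SignType) : ℝ →* SignType).comp
      ((τ i).toMonoidHom.comp (algebraMap (𝓞 K) K).toMonoidHom)

theorem ker_signsHom_le_Eplus (τ : Fin (n + 1) → (K →+* ℝ)) : (signsHom τ).ker ≤ Eplus τ := by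
  intro u hu i
  have h := Units.ext_iff.mp (congr_fun (MonoidHom.mem_ker.mp hu) i)
  simp only [signsHom, MonoidHom.pi_apply, Units.coe_map] at h
  exact sign_eq_one_iff.mp h

instance finiteIndex_Eplus (τ : Fin (n + 1) → (K →+* ℝ)) : (Eplus τ).FiniteIndex :=
  Subgroup.finiteIndex_of_le (ker_signsHom_le_Eplus τ)

theorem det_LogMat_ne_zero [NumberField K] {τ : Fin (n + 1) → (K →+* ℝ)}
    (hτ : Function.Bijective (ofRealEmbedding ∘ τ)) {ε : Fin n → (𝓞 K)ˣ}
    (hV : (V ε).FiniteIndex) : (LogMat τ ε).det ≠ 0 := by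
  have hrank := rank_eq_of_bijective hτ
  let P := Equiv.ofBijective _ hτ
  let g : Fin n ≃ {w // w ≠ P (Fin.last n)} := (finSuccAboveEquiv (Fin.last n)).trans
    (P.subtypeEquiv fun _ => P.injective.ne_iff.symm)
  -- `regOfFamily` wants a family indexed by `Fin (rank K)`, and `rank K = n` is not definitional
  let u : Fin (rank K) → (𝓞 K)ˣ := ε ∘ finCongr hrank
  have hu : IsMaxRank u := by
    rw [isMaxRank_iff_closure_finiteIndex]
    simpa [u, V, Set.range_comp, (finCongr hrank).surjective.range_eq] using hV
  have hg : ∀ c, ((g c : {w // w ≠ P (Fin.last n)}) : InfinitePlace K) =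
      ofRealEmbedding (τ c.castSucc) := by
    intro c
    simp only [g, Equiv.trans_apply, Equiv.subtypeEquiv_apply, finSuccAboveEquiv_apply,
      Fin.succAbove_last]
    rfl
  have hreg := regOfFamily_eq_det u (P (Fin.last n)) (g.symm.trans (finCongr hrank.symm))
  have hmat : (Matrix.of fun i w : {w // w ≠ P (Fin.last n)} ↦
      (w.val.mult : ℝ) * Real.log (w.val (u ((g.symm.trans (finCongr hrank.symm)) i) : K))) =
      Matrix.reindex g g (LogMat τ ε).transpose := by
    ext i w
    obtain ⟨a, rfl⟩ := g.surjective i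
    obtain ⟨b, rfl⟩ := g.surjective w
    simp [u, LogMat, hg, (isReal_ofRealEmbedding _).mult_eq_one, ofRealEmbedding_apply]
  rw [hmat, Matrix.det_reindex_self, Matrix.det_transpose] at hreg
  intro h
  exact regOfFamily_ne_zero hu (by rw [hreg, h, abs_zero])

theorem LOGMat_eq_LogMat_add [NumberField K] {τ : Fin (n + 1) → (K →+* ℝ)}
    (hτ : Function.Bijective (ofRealEmbedding ∘ τ)) (ε : Fin n → (𝓞 K)ˣ) :
    LOGMat τ ε = LogMat τ ε + Matrix.of fun _ i => ∑ k, LogMat τ ε k i := by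
  ext l i
  have hne : ∀ j, τ j (ε i : K) ≠ 0 := fun j => by simp
  have hsum := sum_log_eq_zero_of_bijective hτ (ε i)
  rw [Fin.sum_univ_castSucc] at hsum
  simp only [LOGMat, LogMat, ell, emb, Matrix.add_apply, Matrix.of_apply]
  rw [Real.log_div (hne _) (hne _)]
  linarith

theorem det_LOG_eq_degree_mul_det_Log_general
    {K : Type*} [Field K] [NumberField K] {n : ℕ}
    (τ : Fin (n + 1) → (K →+* ℝ)) (hτ : Function.Injective τ)
    (hdeg : Module.finrank ℚ K = n + 1)
    (ε : Fin n → (𝓞 K)ˣ)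
    (hfin : (V ε).relIndex (Eplus τ) ≠ 0) :
    (LOGMat τ ε).det = (n + 1 : ℝ) * (LogMat τ ε).det ∧
    (LogMat τ ε).det ≠ 0 ∧ (LOGMat τ ε).det ≠ 0 ∧
    Real.sign (LOGMat τ ε).det = Real.sign (LogMat τ ε).det ∧
    Submodule.span ℝ
      (Set.range fun i : Fin n => fun l => Real.log (ell (emb τ ((ε i : 𝓞 K) : K)) l)) = ⊤ ∧
    DiscreteTopology
      (Submodule.span ℤ
        (Set.range fun i : Fin n => fun l => Real.log (ell (emb τ ((ε i : 𝓞 K) : K)) l))) := by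
  have hτ' := bijective_ofRealEmbedding_comp hτ (by rw [hdeg, Fintype.card_fin])
  have hLog := det_LogMat_ne_zero hτ' (Subgroup.finiteIndex_of_relIndex_ne_zero hfin)
  have hdet : (LOGMat τ ε).det = (n + 1 : ℝ) * (LogMat τ ε).det := by
    rw [LOGMat_eq_LogMat_add hτ', Matrix.det_add_of_colSum, Fintype.card_fin]
  have hLOG : (LOGMat τ ε).det ≠ 0 := by
    rw [hdet]
    exact mul_ne_zero n.cast_add_one_ne_zero hLog
  refine ⟨hdet, hLog, hLOG, ?_, Matrix.span_range_col_eq_top hLOG,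
    Matrix.discreteTopology_span_int_range_col hLOG⟩
  rw [hdet]
  exact Real.sign_mul_of_pos n.cast_add_one_pos _

/-- **Lemma 19.** `det(LOG ε̃_1,…,LOG ε̃_n) = (n+1)·det(Log ε_1,…,Log ε_n)`; in particular
neither determinant vanishes, both have the same sign, and `Λ = ∑ ℤ·LOG ε̃_i` is a full
lattice in `ℝ^n`. -/
theorem det_LOG_eq_degree_mul_det_Log
    {K : Type*} [Field K] [NumberField K] {n : ℕ} (hn : 1 ≤ n)
    (τ : Fin (n + 1) → (K →+* ℝ)) (hτ : Function.Injective τ)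
    (hdeg : Module.finrank ℚ K = n + 1)
    (ε : Fin n → (𝓞 K)ˣ) (hpos : ∀ i, ε i ∈ Eplus τ)
    (hfin : (V ε).relIndex (Eplus τ) ≠ 0) :
    (LOGMat τ ε).det = (n + 1 : ℝ) * (LogMat τ ε).det ∧
    (LogMat τ ε).det ≠ 0 ∧ (LOGMat τ ε).det ≠ 0 ∧
    Real.sign (LOGMat τ ε).det = Real.sign (LogMat τ ε).det ∧
    Submodule.span ℝ
      (Set.range fun i : Fin n => fun l => Real.log (ell (emb τ ((ε i : 𝓞 K) : K)) l)) = ⊤ ∧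
    DiscreteTopology
      (Submodule.span ℤ
        (Set.range fun i : Fin n => fun l => Real.log (ell (emb τ ((ε i : 𝓞 K) : K)) l))) :=
  det_LOG_eq_degree_mul_det_Log_general τ hτ hdeg ε hfin

end SignedDomain
end
end

section
/- Suppose g_0 and g_1 are continuous maps from I^{n−1} := [0,1]^{n−1} to ℝ^{n−1}_+ such that for every standard basis vector e_j of ℝ^{n−1}, g_i(x + e_j) = ε̃_j · g_i(x) whenever x ∈ I^{n−1} and x + e_j ∈ I^{n−1} (i = 0, 1). Then g_0 and g_1 descend to continuous maps G_0, G_1 : T̂ → T (i.e., G_i ∘ π̂ = π ∘ g_i on I^{n−1}), and G_0 is homotopic to G_1. -/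
open scoped Classical NumberField
open NumberField

noncomputable section

namespace SignedDomain

variable {K : Type*} [Field K] [NumberField K] {n : ℕ}

/-- The lattice `ℤ^n ⊂ ℝ^n`. -/
def intLattice (m : ℕ) : AddSubgroup (Fin m → ℝ) :=
  AddSubgroup.closure (Set.range fun i : Fin m => (Pi.single i 1 : Fin m → ℝ))

/-- The standard torus `T̂ = ℝ^n/ℤ^n`. -/
abbrev TorusHat (m : ℕ) := (Fin m → ℝ) ⧸ intLattice m

/-- The relation on the positive orthant identifying points in the same `Ṽ`-orbit. -/
def relV {K : Type*} [Field K] [NumberField K] {n : ℕ}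
    (τ : Fin (n + 1) → (K →+* ℝ)) (ε : Fin n → (𝓞 K)ˣ)
    (a b : {x : Fin n → ℝ // ∀ i, 0 < x i}) : Prop :=
  ∃ u ∈ V ε, (b : Fin n → ℝ) = ell (emb τ ((u : 𝓞 K) : K)) * (a : Fin n → ℝ)

/-- The torus `T = ℝ^n_+/Ṽ`. -/
abbrev TorusT {K : Type*} [Field K] [NumberField K] {n : ℕ}
    (τ : Fin (n + 1) → (K →+* ℝ)) (ε : Fin n → (𝓞 K)ˣ) :=
  Quot (relV τ ε)

/-!
Extend `g` from the cube to all of `ℝⁿ` by `x ↦ (∏ⱼ ε̃ⱼ ^ ⌊xⱼ⌋) · g (fract x)`. The face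
condition makes the extension agree with `g` on the cube and glue continuously across the
translated cubes, and translation by `m ∈ ℤⁿ` multiplies it by `∏ⱼ ε̃ⱼ ^ mⱼ ∈ Ṽ`, so it descends
to a map `T̂ → T`. The straight-line family `(1 - t) g₀ + t g₁` stays positive and satisfies the
face condition, so descending the whole family at once gives the homotopy.
-/

open Set Function Filter Topology

theorem LocallyFinite.univ_pi {ι : Type*} [Finite ι] {κ X : ι → Type*}
    [∀ j, TopologicalSpace (X j)] {f : ∀ j, κ j → Set (X j)}
    (hf : ∀ j, LocallyFinite (f j)) :
    LocallyFinite fun m : ∀ j, κ j => univ.pi fun j => f j (m j) := by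
  intro x
  choose U hU hfin using fun j => hf j (x j)
  refine ⟨univ.pi U, set_pi_mem_nhds finite_univ fun j _ => hU j,
    (Set.Finite.pi hfin).subset ?_⟩
  rintro m ⟨y, hyf, hyU⟩
  exact fun j _ => ⟨y j, hyf j trivial, hyU j trivial⟩

theorem exists_continuousMap_prod_quotientAddGroup_lift {Y Z E : Type*} [TopologicalSpace Y]
    [TopologicalSpace Z] [TopologicalSpace E] [AddGroup E] [SeparatelyContinuousAdd E]
    (N : AddSubgroup E) (F : Y × E → Z) (hF : Continuous F)
    (hN : ∀ y x, ∀ l ∈ N, F (y, x + l) = F (y, x)) :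
    ∃ G : C(Y × (E ⧸ N), Z), ∀ y x, G (y, QuotientAddGroup.mk x) = F (y, x) := by
  let q : C(Y × E, Y × (E ⧸ N)) := ⟨Prod.map id QuotientAddGroup.mk, by fun_prop⟩
  have hq : IsQuotientMap q :=
    (IsOpenQuotientMap.id.prodMap QuotientAddGroup.isOpenQuotientMap_mk).isQuotientMap
  have hfac : FactorsThrough F q := by
    rintro ⟨y, x⟩ ⟨y', x'⟩ h
    obtain ⟨rfl, hx⟩ : y = y' ∧ (x : E ⧸ N) = x' := Prod.ext_iff.1 h
    have hl : -x + x' ∈ N := QuotientAddGroup.eq.1 hx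
    simpa using (hN y x _ hl).symm
  exact ⟨hq.lift ⟨F, hF⟩ hfac, fun y x =>
    DFunLike.congr_fun (hq.lift_comp ⟨F, hF⟩ hfac) (y, x)⟩

section EquivariantExtension

lemma fract_mem_cube (x : Fin n → ℝ) : (fun j => Int.fract (x j)) ∈ cube n :=
  fun _ => ⟨Int.fract_nonneg _, (Int.fract_lt_one _).le⟩

lemma sub_intCast_mem_cube_iff {x : Fin n → ℝ} {m : Fin n → ℤ} :
    (x - fun j => (m j : ℝ)) ∈ cube n ↔ x ∈ univ.pi fun j => Icc (m j : ℝ) (m j + 1) := by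
  simp only [cube, mem_ofPred_eq, mem_univ_pi, mem_Icc, Pi.sub_apply, sub_nonneg,
    sub_le_iff_le_add']

lemma exists_intCast_of_mem_intLattice {l : Fin n → ℝ} (hl : l ∈ intLattice n) :
    ∃ m : Fin n → ℤ, l = fun j => (m j : ℝ) := by
  have : intLattice n ≤ ((Int.castAddHom ℝ).compLeft (Fin n)).range := by
    refine (AddSubgroup.closure_le _).2 ?_
    rintro _ ⟨j, rfl⟩
    exact ⟨Pi.single j 1, by ext k; simp [Pi.single_apply]⟩
  obtain ⟨m, rfl⟩ := this hl
  exact ⟨m, rfl⟩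

variable {G X : Type*} [CommGroup G] [MulAction G X]

def equivariantExtension (a : Fin n → G) (g : (Fin n → ℝ) → X) (x : Fin n → ℝ) : X :=
  (∏ j, a j ^ ⌊x j⌋) • g fun j => Int.fract (x j)

def FaceCompatible (a : Fin n → G) (g : (Fin n → ℝ) → X) : Prop :=
  ∀ x j, x ∈ cube n → x + Pi.single j 1 ∈ cube n → g (x + Pi.single j 1) = a j • g x

variable (a : Fin n → G) (g : (Fin n → ℝ) → X)

theorem equivariantExtension_add_intCast (x : Fin n → ℝ) (m : Fin n → ℤ) :
    equivariantExtension a g (x + fun j => (m j : ℝ)) =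
      (∏ j, a j ^ m j) • equivariantExtension a g x := by
  simp only [equivariantExtension, Pi.add_apply, Int.floor_add_intCast, Int.fract_add_intCast,
    zpow_add, Finset.prod_mul_distrib, mul_comm _ (∏ j, a j ^ m j), mul_smul]

theorem equivariantExtension_add_single (x : Fin n → ℝ) (j : Fin n) :
    equivariantExtension a g (x + Pi.single j 1) = a j • equivariantExtension a g x := by
  have hcast : (fun k => ((Pi.single j 1 : Fin n → ℤ) k : ℝ)) = Pi.single j 1 := by
    ext k; by_cases hk : k = j <;> simp [hk]
  have hprod : ∏ k, a k ^ (Pi.single j 1 : Fin n → ℤ) k = a j := by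
    simp [Pi.single_apply]
  simpa [hcast, hprod] using equivariantExtension_add_intCast a g x (Pi.single j 1)

variable {a g}

theorem FaceCompatible.equivariantExtension_eq (h : FaceCompatible a g) {x : Fin n → ℝ}
    (hx : x ∈ cube n) : equivariantExtension a g x = g x := by
  suffices ∀ S : Finset (Fin n), ∀ x ∈ cube n, (∀ j, x j = 1 → j ∈ S) →
      equivariantExtension a g x = g x from this Finset.univ x hx fun j _ => Finset.mem_univ j
  intro S
  induction S using Finset.induction_on with
  | empty =>
    intro x hx hS
    have hlt : ∀ j, 0 ≤ x j ∧ x j < 1 := fun j =>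
      ⟨(hx j).1, (hx j).2.lt_of_ne fun h => by simpa using hS j h⟩
    simp [equivariantExtension, Int.floor_eq_zero_iff.2 (hlt _), Int.fract_eq_self.2 (hlt _)]
  | insert b S hb ih =>
    intro x hx hS
    by_cases hxb : x b = 1
    · set y := x - Pi.single b 1
      have hyx : y + Pi.single b 1 = x := sub_add_cancel x _
      have hy : y ∈ cube n := fun j => by
        by_cases hj : j = b
        · subst hj; simp [y, hxb]
        · simpa [y, hj] using hx j
      have hyS : ∀ j, y j = 1 → j ∈ S := fun j hj => by
        by_cases hjb : j = b
        · subst hjb; simp [y, hxb] at hj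
        · simpa [hjb] using hS j (by simpa [y, hjb] using hj)
      rw [← hyx, equivariantExtension_add_single, ih y hy hyS, h y b hy (hyx ▸ hx)]
    · exact ih x hx fun j hj => (Finset.mem_insert.1 (hS j hj)).resolve_left
        fun hjb => hxb (hjb ▸ hj)

theorem FaceCompatible.equivariantExtension_eq_smul (h : FaceCompatible a g) {x : Fin n → ℝ}
    {m : Fin n → ℤ} (hx : (x - fun j => (m j : ℝ)) ∈ cube n) :
    equivariantExtension a g x = (∏ j, a j ^ m j) • g (x - fun j => (m j : ℝ)) := by
  rw [← h.equivariantExtension_eq hx, ← equivariantExtension_add_intCast, sub_add_cancel]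

theorem FaceCompatible.continuous_equivariantExtension [TopologicalSpace X]
    [ContinuousConstSMul G X] {Y : Type*} [TopologicalSpace Y] {g : Y → (Fin n → ℝ) → X}
    (hc : ContinuousOn (uncurry g) (univ ×ˢ cube n)) (h : ∀ y, FaceCompatible a (g y)) :
    Continuous fun p : Y × (Fin n → ℝ) => equivariantExtension a (g p.1) p.2 := by
  have hlf : LocallyFinite fun m : Fin n → ℤ => univ.pi fun j => Icc (m j : ℝ) (m j + 1) :=
    LocallyFinite.univ_pi fun _ => locallyFinite_Icc_of_tendsto tendsto_intCast_atTop_atTop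
      (tendsto_atBot_add_const_right _ 1 (tendsto_intCast_atBot_iff.2 tendsto_id))
  refine (hlf.preimage_continuous continuous_snd).continuous ?_ (fun m => ?_) fun m => ?_
  · refine iUnion_eq_univ_iff.2 fun p => ⟨fun j => ⌊p.2 j⌋, ?_⟩
    exact sub_intCast_mem_cube_iff.1 (fract_mem_cube p.2)
  · exact (isClosed_set_pi fun j _ => isClosed_Icc).preimage continuous_snd
  · have hmaps : MapsTo (fun p : Y × (Fin n → ℝ) => (p.1, p.2 - fun j => (m j : ℝ)))
        (Prod.snd ⁻¹' univ.pi fun j => Icc (m j : ℝ) (m j + 1)) (univ ×ˢ cube n) :=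
      fun p hp => ⟨trivial, sub_intCast_mem_cube_iff.2 hp⟩
    refine ((hc.comp (by fun_prop) hmaps).const_smul (∏ j, a j ^ m j)).congr fun p hp => ?_
    exact (h p.1).equivariantExtension_eq_smul (sub_intCast_mem_cube_iff.2 hp)

end EquivariantExtension

section UnitAction

variable {K : Type*} [Field K] (τ : Fin (n + 1) → (K →+* ℝ))

def ellEmb : K →* (Fin n → ℝ) where
  toFun x := ell (emb τ x)
  map_one' := by ext i; simp [ell, emb]
  map_mul' x y := by ext i; simp [ell, emb, div_mul_div_comm]

def unitsEll : (𝓞 K)ˣ →* (Fin n → ℝ)ˣ :=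
  Units.map ((ellEmb τ).comp (algebraMap (𝓞 K) K : 𝓞 K →* K))

@[simp]
lemma coe_unitsEll (u : (𝓞 K)ˣ) :
    (unitsEll τ u : Fin n → ℝ) = ell (emb τ ((u : 𝓞 K) : K)) :=
  rfl

lemma ell_emb_pos {u : (𝓞 K)ˣ} (hu : u ∈ Eplus τ) (i : Fin n) :
    0 < ell (emb τ ((u : 𝓞 K) : K)) i :=
  div_pos (hu _) (hu _)

theorem exists_descended_torus_family [NumberField K] (ε : Fin n → (𝓞 K)ˣ)
    (hpos : ∀ i, ε i ∈ Eplus τ)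
    {Y : Type*} [TopologicalSpace Y] (g : Y → (Fin n → ℝ) → (Fin n → ℝ))
    (hc : ContinuousOn (uncurry g) (univ ×ˢ cube n))
    (hp : ∀ y, ∀ x ∈ cube n, ∀ i, 0 < g y x i)
    (hper : ∀ y x j, x ∈ cube n → x + Pi.single j 1 ∈ cube n →
      g y (x + Pi.single j 1) = ell (emb τ ((ε j : 𝓞 K) : K)) * g y x) :
    ∃ G : C(Y × TorusHat n, TorusT τ ε), ∀ y x (hx : x ∈ cube n),
      G (y, QuotientAddGroup.mk x) = Quot.mk (relV τ ε) ⟨g y x, hp y x hx⟩ := by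
  set a : Fin n → (Fin n → ℝ)ˣ := fun j => unitsEll τ (ε j)
  have hfc : ∀ y, FaceCompatible a (g y) := fun y x j hx hxj => hper y x j hx hxj
  have hprod : ∀ m : Fin n → ℤ, ∏ j, a j ^ m j = unitsEll τ (∏ j, ε j ^ m j) := by
    simp [a, map_prod, map_zpow]
  have hmem : ∀ S : Subgroup (𝓞 K)ˣ, (∀ j, ε j ∈ S) → ∀ m : Fin n → ℤ,
      ∏ j, ε j ^ m j ∈ S :=
    fun S hS m => Subgroup.prod_mem S fun j _ => Subgroup.zpow_mem S (hS j) _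
  have hext_pos : ∀ y x i, 0 < equivariantExtension a (g y) x i := fun y x i =>
    mul_pos (by rw [hprod]; exact ell_emb_pos τ (hmem _ hpos _) i) (hp y _ (fract_mem_cube x) i)
  let F : Y × (Fin n → ℝ) → TorusT τ ε := fun p =>
    Quot.mk _ ⟨equivariantExtension a (g p.1) p.2, hext_pos p.1 p.2⟩
  have hF : Continuous F :=
    continuous_quot_mk.comp ((FaceCompatible.continuous_equivariantExtension hc hfc).subtype_mk _)
  obtain ⟨G, hG⟩ := exists_continuousMap_prod_quotientAddGroup_lift (intLattice n) F hF
    fun y x l hl => by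
      obtain ⟨m, rfl⟩ := exists_intCast_of_mem_intLattice hl
      have hV : ∏ j, ε j ^ m j ∈ V ε :=
        hmem _ (fun j => Subgroup.subset_closure (mem_range_self j)) m
      refine (Quot.sound ⟨_, hV, ?_⟩).symm
      change equivariantExtension a (g y) _ = _
      rw [equivariantExtension_add_intCast, hprod]
      rfl
  refine ⟨G, fun y x hx => ?_⟩
  rw [hG]
  exact congrArg _ (Subtype.ext ((hfc y).equivariantExtension_eq hx))

end UnitAction

theorem descended_torus_maps_homotopic_general
    {K : Type*} [Field K] [NumberField K] {n : ℕ}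
    (τ : Fin (n + 1) → (K →+* ℝ))
    (ε : Fin n → (𝓞 K)ˣ) (hpos : ∀ i, ε i ∈ Eplus τ)
    (g₀ g₁ : (Fin n → ℝ) → (Fin n → ℝ))
    (hc₀ : ContinuousOn g₀ (cube n)) (hc₁ : ContinuousOn g₁ (cube n))
    (hp₀ : ∀ x ∈ cube n, ∀ i, 0 < g₀ x i) (hp₁ : ∀ x ∈ cube n, ∀ i, 0 < g₁ x i)
    (hper₀ : ∀ (x : Fin n → ℝ) (j : Fin n), x ∈ cube n → x + Pi.single j 1 ∈ cube n →
      g₀ (x + Pi.single j 1) = ell (emb τ ((ε j : 𝓞 K) : K)) * g₀ x)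
    (hper₁ : ∀ (x : Fin n → ℝ) (j : Fin n), x ∈ cube n → x + Pi.single j 1 ∈ cube n →
      g₁ (x + Pi.single j 1) = ell (emb τ ((ε j : 𝓞 K) : K)) * g₁ x) :
    ∃ G₀ G₁ : C(TorusHat n, TorusT τ ε),
      (∀ x (hx : x ∈ cube n),
        G₀ (QuotientAddGroup.mk x) = Quot.mk (relV τ ε) ⟨g₀ x, hp₀ x hx⟩) ∧
      (∀ x (hx : x ∈ cube n),
        G₁ (QuotientAddGroup.mk x) = Quot.mk (relV τ ε) ⟨g₁ x, hp₁ x hx⟩) ∧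
      G₀.Homotopic G₁ := by
  let g : unitInterval → (Fin n → ℝ) → (Fin n → ℝ) := fun t x =>
    (1 - (t : ℝ)) • g₀ x + (t : ℝ) • g₁ x
  have hc : ContinuousOn (uncurry g) (univ ×ˢ cube n) :=
    ((continuous_const.sub continuous_subtype_val).comp continuous_fst).continuousOn.smul
        (hc₀.comp continuousOn_snd fun _ hp => hp.2) |>.add <|
      (continuous_subtype_val.comp continuous_fst).continuousOn.smul
        (hc₁.comp continuousOn_snd fun _ hp => hp.2)
  have hp : ∀ t, ∀ x ∈ cube n, ∀ i, 0 < g t x i := fun t x hx i =>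
    convex_Ioi (0 : ℝ) (hp₀ x hx i) (hp₁ x hx i) (sub_nonneg.2 t.2.2) t.2.1
      (sub_add_cancel _ _)
  have hper : ∀ t x j, x ∈ cube n → x + Pi.single j 1 ∈ cube n →
      g t (x + Pi.single j 1) = ell (emb τ ((ε j : 𝓞 K) : K)) * g t x := by
    intro t x j hx hxj
    simp only [g, hper₀ x j hx hxj, hper₁ x j hx hxj, mul_add, mul_smul_comm]
  obtain ⟨H, hH⟩ := exists_descended_torus_family τ ε hpos g hc hp hper
  refine ⟨H.curry 0, H.curry 1, fun x hx => ?_, fun x hx => ?_,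
    ⟨⟨H, fun _ => rfl, fun _ => rfl⟩⟩⟩
  · rw [ContinuousMap.curry_apply, hH 0 x hx]
    congr 2; simp [g]
  · rw [ContinuousMap.curry_apply, hH 1 x hx]
    congr 2; simp [g]

/-- **Lemma 20.** Two maps on the unit cube compatible with the unit action across opposite
faces descend to the tori `T̂ → T`, and the descended maps are homotopic. -/
theorem descended_torus_maps_homotopic
    {K : Type*} [Field K] [NumberField K] {n : ℕ} (hn : 1 ≤ n)
    (τ : Fin (n + 1) → (K →+* ℝ)) (hτ : Function.Injective τ)
    (hdeg : Module.finrank ℚ K = n + 1)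
    (ε : Fin n → (𝓞 K)ˣ) (hpos : ∀ i, ε i ∈ Eplus τ)
    (g₀ g₁ : (Fin n → ℝ) → (Fin n → ℝ))
    (hc₀ : ContinuousOn g₀ (cube n)) (hc₁ : ContinuousOn g₁ (cube n))
    (hp₀ : ∀ x ∈ cube n, ∀ i, 0 < g₀ x i) (hp₁ : ∀ x ∈ cube n, ∀ i, 0 < g₁ x i)
    (hper₀ : ∀ (x : Fin n → ℝ) (j : Fin n), x ∈ cube n → x + Pi.single j 1 ∈ cube n →
      g₀ (x + Pi.single j 1) = ell (emb τ ((ε j : 𝓞 K) : K)) * g₀ x)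
    (hper₁ : ∀ (x : Fin n → ℝ) (j : Fin n), x ∈ cube n → x + Pi.single j 1 ∈ cube n →
      g₁ (x + Pi.single j 1) = ell (emb τ ((ε j : 𝓞 K) : K)) * g₁ x) :
    ∃ G₀ G₁ : C(TorusHat n, TorusT τ ε),
      (∀ x (hx : x ∈ cube n),
        G₀ (QuotientAddGroup.mk x) = Quot.mk (relV τ ε) ⟨g₀ x, hp₀ x hx⟩) ∧
      (∀ x (hx : x ∈ cube n),
        G₁ (QuotientAddGroup.mk x) = Quot.mk (relV τ ε) ⟨g₁ x, hp₁ x hx⟩) ∧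
      G₀.Homotopic G₁ :=
  descended_torus_maps_homotopic_general τ ε hpos g₀ g₁ hc₀ hc₁ hp₀ hp₁ hper₀ hper₁

end SignedDomain
end
end

section
/- Let σ ∈ S_{n−1} with w_σ ≠ 0. Every γ ∈ C_σ can be written uniquely as γ = ∑_{i=1}^n t_i f_{i,σ} + ∑_{i=1}^n m_i f_{i,σ} with t_i ∈ I_{i,σ} and m_i ∈ ℤ_{≥0}, and conversely every such choice of t_i ∈ I_{i,σ} and m_i ∈ ℤ_{≥0} yields an element of C_σ. Moreover, if γ ∈ C_σ also lies in k (under the embedding k ↪ ℝ^n) and M is a fractional ideal of k containing the ring of integers O_k, then γ ∈ M if and only if z := ∑_{i=1}^n t_i f_{i,σ} ∈ M. -/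
/-!
Since `w_σ ≠ 0`, the determinant of the `f_{i,σ}` is nonzero, so they form a basis of `ℝⁿ` and
the coefficients of `γ ∈ C_σ` are unique. Each coefficient lies in `R_{i,σ}`, and `I_{i,σ}` is a
half-open interval of length one, so it splits uniquely as a point of `I_{i,σ}` plus a natural
number. Finally `γ - z = ∑ mᵢ f_{i,σ}` is the image of an element of `O_k ⊆ M`, the `f_{i,σ}`
being units.
-/

open scoped Classical NumberField
open NumberField

noncomputable section

namespace SignedDomain

variable {K : Type*} [Field K] [NumberField K] {n : ℕ}

/-- The coefficient range `I_{i,σ}`. -/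
def Iset {K : Type*} [Field K] [NumberField K] {n : ℕ}
    (τ : Fin (n + 1) → (K →+* ℝ)) (ε : Fin n → (𝓞 K)ˣ) (σ : Equiv.Perm (Fin n))
    (i : Fin (n + 1)) : Set ℝ :=
  if posSide τ ε σ i then Set.Ico 0 1 else Set.Ioc 0 1


end SignedDomain

theorem eq_of_add_natCast_eq_add_natCast {t t' : ℝ} {m m' : ℕ} (h : t + m = t' + m')
    (ht : |t - t'| < 1) : t = t' ∧ m = m' := by
  have hm : |((m : ℤ) - m' : ℤ)| < 1 := by
    have : (m : ℝ) - m' = -(t - t') := by linarith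
    exact_mod_cast (show |((m : ℝ) - m')| < 1 by rwa [this, abs_neg])
  obtain rfl : m = m' := by rw [abs_lt] at hm; omega
  exact ⟨by linarith, rfl⟩

theorem existsUnique_add_natCast {I : Set ℝ} (hI : ∀ x ∈ I, ∀ y ∈ I, |x - y| < 1) {c : ℝ}
    (h : ∃ t ∈ I, ∃ m : ℕ, c = t + m) : ∃! p : ℝ × ℕ, p.1 ∈ I ∧ c = p.1 + p.2 := by
  obtain ⟨t, ht, m, rfl⟩ := h
  refine ⟨(t, m), ⟨ht, rfl⟩, ?_⟩
  rintro ⟨t', m'⟩ ⟨ht', h⟩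
  obtain ⟨rfl, rfl⟩ := eq_of_add_natCast_eq_add_natCast h.symm (hI _ ht' _ ht)
  rfl

theorem exists_mem_Ico_add_natCast {c : ℝ} (hc : 0 ≤ c) :
    ∃ t ∈ Set.Ico (0 : ℝ) 1, ∃ m : ℕ, c = t + m :=
  ⟨c - ⌊c⌋₊, ⟨sub_nonneg.2 (Nat.floor_le hc), by linarith [Nat.lt_floor_add_one c]⟩,
    ⌊c⌋₊, by ring⟩

theorem exists_mem_Ioc_add_natCast {c : ℝ} (hc : 0 < c) :
    ∃ t ∈ Set.Ioc (0 : ℝ) 1, ∃ m : ℕ, c = t + m := by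
  have hcast : ((⌈c⌉₊ - 1 : ℕ) : ℝ) = ⌈c⌉₊ - 1 := by
    rw [Nat.cast_sub (Nat.one_le_iff_ne_zero.2 (Nat.ceil_pos.2 hc).ne'), Nat.cast_one]
  refine ⟨c - (⌈c⌉₊ - 1 : ℕ), ⟨?_, ?_⟩, ⌈c⌉₊ - 1, by ring⟩ <;> rw [hcast]
  · linarith [Nat.ceil_lt_add_one hc.le]
  · linarith [Nat.le_ceil c]

theorem LinearIndependent.existsUnique_sum_add_natCast_smul {ι E : Type*} [Fintype ι]
    [AddCommGroup E] [Module ℝ E] {v : ι → E} (hv : LinearIndependent ℝ v) {I : ι → Set ℝ}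
    {c : ι → ℝ} (hc : ∀ i, ∃! p : ℝ × ℕ, p.1 ∈ I i ∧ c i = p.1 + p.2) :
    ∃! p : (ι → ℝ) × (ι → ℕ),
      (∀ i, p.1 i ∈ I i) ∧ ∑ i, c i • v i = ∑ i, (p.1 i + (p.2 i : ℝ)) • v i := by
  choose q hq hq_unique using hc
  refine ⟨(fun i => (q i).1, fun i => (q i).2), ⟨fun i => (hq i).1, ?_⟩, ?_⟩
  · exact Finset.sum_congr rfl fun i _ => by rw [(hq i).2]
  rintro ⟨t, m⟩ ⟨ht, heq⟩
  have htm : ∀ i, (t i, m i) = q i := fun i => hq_unique i _ ⟨ht i, hv.eq_coords_of_eq heq i⟩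
  exact Prod.ext (funext fun i => congrArg Prod.fst (htm i))
    (funext fun i => congrArg Prod.snd (htm i))

theorem FractionalIdeal.mem_iff_of_sub_mem_one {R P : Type*} [CommRing R] {S : Submonoid R}
    [CommRing P] [Algebra R P] {M : FractionalIdeal S P} (hM : 1 ≤ M) {a z : P}
    (h : a - z ∈ (1 : FractionalIdeal S P)) : a ∈ M ↔ z ∈ M := by
  rw [← FractionalIdeal.mem_coe, ← FractionalIdeal.mem_coe, ← sub_sub_cancel a z]
  exact (Submodule.sub_mem_iff_left _ (FractionalIdeal.mem_coe.2 (hM h))).symm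

namespace SignedDomain

variable {K : Type*} [Field K] {n : ℕ}

section

variable (τ : Fin (n + 1) → (K →+* ℝ)) (ε : Fin n → (𝓞 K)ˣ) (σ : Equiv.Perm (Fin n))

theorem det_Fmat_ne_zero (hσ : w τ ε σ ≠ 0) : (Fmat τ ε σ).det ≠ 0 := by
  intro h
  simp [w, h] at hσ

theorem linearIndependent_fvec (hσ : w τ ε σ ≠ 0) : LinearIndependent ℝ (fvec τ ε σ) :=
  Matrix.linearIndependent_cols_of_det_ne_zero (det_Fmat_ne_zero τ ε σ hσ)

variable {τ ε σ} [NumberField K]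

theorem abs_sub_lt_one_of_mem_Iset {i : Fin (n + 1)} {x y : ℝ} (hx : x ∈ Iset τ ε σ i)
    (hy : y ∈ Iset τ ε σ i) : |x - y| < 1 := by
  unfold Iset at hx hy
  split_ifs at hx hy
  · exact abs_sub_lt_of_nonneg_of_lt hx.1 hx.2 hy.1 hy.2
  · rw [abs_sub_lt_iff]; constructor <;> linarith [hx.1, hx.2, hy.1, hy.2]

theorem existsUnique_mem_Iset_add_natCast {i : Fin (n + 1)} {c : ℝ} (hc : c ∈ Rset τ ε σ i) :
    ∃! p : ℝ × ℕ, p.1 ∈ Iset τ ε σ i ∧ c = p.1 + p.2 := by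
  refine existsUnique_add_natCast (fun x hx y hy => abs_sub_lt_one_of_mem_Iset hx hy) ?_
  unfold Rset at hc
  unfold Iset
  split_ifs at hc ⊢
  · exact exists_mem_Ico_add_natCast hc
  · exact exists_mem_Ioc_add_natCast hc

theorem add_natCast_mem_Rset {i : Fin (n + 1)} {t : ℝ} (ht : t ∈ Iset τ ε σ i) (m : ℕ) :
    t + m ∈ Rset τ ε σ i := by
  unfold Iset at ht
  unfold Rset
  split_ifs at ht ⊢
  · exact add_nonneg ht.1 m.cast_nonneg
  · exact add_pos_of_pos_of_nonneg ht.1 m.cast_nonneg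

end

theorem emb_eq_ringHomPi (τ : Fin (n + 1) → (K →+* ℝ)) : emb τ = RingHom.pi τ := rfl

theorem emb_injective (τ : Fin (n + 1) → (K →+* ℝ)) : Function.Injective (emb τ) :=
  fun _ _ h => (τ 0).injective (congrFun h 0)

def fInt (ε : Fin n → (𝓞 K)ˣ) (σ : Equiv.Perm (Fin n)) (i : Fin (n + 1)) : 𝓞 K :=
  ∏ j ∈ Finset.univ.filter (fun j : Fin n => (j : ℕ) < (i : ℕ)), (ε (σ j) : 𝓞 K)

theorem fvec_eq_emb_fInt (τ : Fin (n + 1) → (K →+* ℝ)) (ε : Fin n → (𝓞 K)ˣ)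
    (σ : Equiv.Perm (Fin n)) (i : Fin (n + 1)) : fvec τ ε σ i = emb τ (fInt ε σ i : K) := by
  funext l
  simp [fvec, emb, fInt, map_prod]

theorem sub_eq_of_emb_eq_sum_smul_fvec {τ : Fin (n + 1) → (K →+* ℝ)} {ε : Fin n → (𝓞 K)ˣ}
    {σ : Equiv.Perm (Fin n)} {a z : K} {t : Fin (n + 1) → ℝ} {m : Fin (n + 1) → ℕ}
    (ha : emb τ a = ∑ i, (t i + (m i : ℝ)) • fvec τ ε σ i)
    (hz : emb τ z = ∑ i, t i • fvec τ ε σ i) :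
    a - z = ((∑ i, m i * fInt ε σ i : 𝓞 K) : K) := by
  apply emb_injective τ
  rw [emb_eq_ringHomPi] at *
  push_cast
  simp only [map_sub, ha, hz, map_sum, map_mul, map_natCast, fvec_eq_emb_fInt, emb_eq_ringHomPi,
    ← Finset.sum_sub_distrib, ← sub_smul, add_sub_cancel_left, Nat.cast_smul_eq_nsmul, nsmul_eq_mul]

theorem cone_decomposition_general
    {K : Type*} [Field K] [NumberField K] {n : ℕ}
    (τ : Fin (n + 1) → (K →+* ℝ))
    (ε : Fin n → (𝓞 K)ˣ)
    (σ : Equiv.Perm (Fin n)) (hσ : w τ ε σ ≠ 0) :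
    (∀ γ ∈ Cone τ ε σ, ∃! p : (Fin (n + 1) → ℝ) × (Fin (n + 1) → ℕ),
      (∀ i, p.1 i ∈ Iset τ ε σ i) ∧ γ = ∑ i, (p.1 i + (p.2 i : ℝ)) • fvec τ ε σ i) ∧
    (∀ (t : Fin (n + 1) → ℝ) (m : Fin (n + 1) → ℕ), (∀ i, t i ∈ Iset τ ε σ i) →
      (∑ i, (t i + (m i : ℝ)) • fvec τ ε σ i) ∈ Cone τ ε σ) ∧
    (∀ M : FractionalIdeal (nonZeroDivisors (𝓞 K)) K, 1 ≤ M →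
      ∀ (a z : K) (t : Fin (n + 1) → ℝ) (m : Fin (n + 1) → ℕ),
        (∀ i, t i ∈ Iset τ ε σ i) →
        emb τ a = ∑ i, (t i + (m i : ℝ)) • fvec τ ε σ i →
        emb τ z = ∑ i, t i • fvec τ ε σ i →
        (a ∈ M ↔ z ∈ M)) := by
  refine ⟨?_, ?_, ?_⟩
  · intro γ hγ
    rw [Cone, if_pos hσ] at hγ
    obtain ⟨c, hc, rfl⟩ := hγ
    exact (linearIndependent_fvec τ ε σ hσ).existsUnique_sum_add_natCast_smul
      fun i => existsUnique_mem_Iset_add_natCast (hc i)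
  · intro t m ht
    rw [Cone, if_pos hσ]
    exact ⟨fun i => t i + m i, fun i => add_natCast_mem_Rset (ht i) (m i), rfl⟩
  · intro M hM a z t m _ ha hz
    refine FractionalIdeal.mem_iff_of_sub_mem_one hM ?_
    rw [sub_eq_of_emb_eq_sum_smul_fvec ha hz]
    exact (FractionalIdeal.mem_one_iff _).2 ⟨_, rfl⟩

/-- Every element of `C_σ` decomposes uniquely as `∑ tᵢ f_{i,σ} + ∑ mᵢ f_{i,σ}` with
`tᵢ ∈ I_{i,σ}` and `mᵢ ∈ ℤ_{≥0}`, and conversely; moreover for a fractional ideal `M ⊇ O_k`,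
membership of such an element of `k` in `M` depends only on its fractional part `z`. -/
theorem cone_decomposition
    {K : Type*} [Field K] [NumberField K] {n : ℕ} (hn : 1 ≤ n)
    (τ : Fin (n + 1) → (K →+* ℝ)) (hτ : Function.Injective τ)
    (hdeg : Module.finrank ℚ K = n + 1)
    (ε : Fin n → (𝓞 K)ˣ) (hpos : ∀ i, ε i ∈ Eplus τ)
    (σ : Equiv.Perm (Fin n)) (hσ : w τ ε σ ≠ 0) :
    (∀ γ ∈ Cone τ ε σ, ∃! p : (Fin (n + 1) → ℝ) × (Fin (n + 1) → ℕ),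
      (∀ i, p.1 i ∈ Iset τ ε σ i) ∧ γ = ∑ i, (p.1 i + (p.2 i : ℝ)) • fvec τ ε σ i) ∧
    (∀ (t : Fin (n + 1) → ℝ) (m : Fin (n + 1) → ℕ), (∀ i, t i ∈ Iset τ ε σ i) →
      (∑ i, (t i + (m i : ℝ)) • fvec τ ε σ i) ∈ Cone τ ε σ) ∧
    (∀ M : FractionalIdeal (nonZeroDivisors (𝓞 K)) K, 1 ≤ M →
      ∀ (a z : K) (t : Fin (n + 1) → ℝ) (m : Fin (n + 1) → ℕ),
        (∀ i, t i ∈ Iset τ ε σ i) →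
        emb τ a = ∑ i, (t i + (m i : ℝ)) • fvec τ ε σ i →
        emb τ z = ∑ i, t i • fvec τ ε σ i →
        (a ∈ M ↔ z ∈ M)) :=
  cone_decomposition_general τ ε σ hσ

end SignedDomain
end
end
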